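/- arXiv:2410.03614 — 5 statements merged into one kernel-verified Lean document; each statement's English description precedes it below -/
import Mathlib

section
/- Suppose the coefficient matrix L ∈ ℝ^{(d+1)×(n+1)} of the affine-linear forms ℓ_0,…,ℓ_n is real, the arrangement 𝒜 is essential, and u ∈ ℝ^{n+1}_+ is a tuple of positive real numbers. Then all solutions of the scattering equations ∂ℒ_u/∂x_1 = ⋯ = ∂ℒ_u/∂x_d = 0 are real, and there is precisely one solution contained in each bounded chamber of the real arrangement complement ℝ^d ∖ 𝒜. -/
open scoped BigOperators
noncomputable section

namespace ScatteringPaper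

open CategoryTheory AlgebraicTopology

/- ## Topological Euler characteristic via rational singular homology -/

/-- The singular chain complex of a topological space, with rational coefficients. -/
def singularChainComplex (X : Type) [TopologicalSpace X] : ChainComplex (ModuleCat ℚ) ℕ :=
  (alternatingFaceMapComplex (ModuleCat ℚ)).obj
    (((SimplicialObject.whiskering _ _).obj (ModuleCat.free ℚ)).obj (TopCat.toSSet.obj (TopCat.of X)))

/-- The `q`-th (rational) Betti number of a topological space. -/
def betti (X : Type) [TopologicalSpace X] (q : ℕ) : ℕ :=
  Module.finrank ℚ ((singularChainComplex X).homology q)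

/-- The topological Euler characteristic, as the alternating sum of Betti numbers. -/
def eulerChar (X : Type) [TopologicalSpace X] : ℤ :=
  ∑ᶠ q : ℕ, (-1 : ℤ) ^ q * (betti X q : ℤ)

variable {d : ℕ} {ι : Type} [Fintype ι] [DecidableEq ι]

/- ## Hyperplane arrangements: `(ℓ_i(x))_i = (1, x_1, …, x_d) · L` -/

/-- Value of the affine-linear form encoded by column `i` of `L`. -/
def ell (K : Type) [Field K] (L : Matrix (Fin (d+1)) ι K) (x : Fin d → K) (i : ι) : K :=
  L 0 i + ∑ j : Fin d, x j * L j.succ i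

/-- The complement `X = ℂ^d ∖ 𝒜` of the arrangement `𝒜 = V(∏ ℓ_i)`. -/
def complementX (L : Matrix (Fin (d+1)) ι ℂ) : Set (Fin d → ℂ) := {x | ∀ i, ell ℂ L x i ≠ 0}

/-- `x ∈ X` is a solution of the scattering equations
`∂ℒ_u/∂x_k = ∑_i u_i a_{ki}/ℓ_i(x) = 0`, `k = 1, …, d`. -/
def IsSol (L : Matrix (Fin (d+1)) ι ℂ) (u : ι → ℂ) (x : Fin d → ℂ) : Prop :=
  x ∈ complementX L ∧ ∀ k : Fin d, ∑ i : ι, u i * L k.succ i / ell ℂ L x i = 0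

/-- An arrangement is essential if some subset of its hyperplanes meets in a single point. -/
def IsEssential (L : Matrix (Fin (d+1)) ι ℂ) : Prop :=
  ∃ (S : Set ι) (x₀ : Fin d → ℂ), {x : Fin d → ℂ | ∀ i ∈ S, ell ℂ L x i = 0} = {x₀}

/-- `P u` holds for all `u` outside a proper algebraic subset (i.e. for generic `u`). -/
def Generically {σ : Type} [Fintype σ] [DecidableEq σ] (P : (σ → ℂ) → Prop) : Prop :=
  ∃ g : MvPolynomial σ ℂ, g ≠ 0 ∧ ∀ u : σ → ℂ, MvPolynomial.eval u g ≠ 0 → P u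

/- ## Matroid data of the columns of `L` -/

/-- Rank of the set `I` of columns of `L` (the matroid rank in `M(L)`). -/
def rkL (K : Type) [Field K] (L : Matrix (Fin (d+1)) ι K) (I : Set ι) : ℕ :=
  Module.finrank K (Submodule.span K ((fun i => fun r => L r i) '' I))

/-- Rank of the set `I` of columns of `A^⊤` (`L` with its first row deleted). -/
def rkA (K : Type) [Field K] (L : Matrix (Fin (d+1)) ι K) (I : Set ι) : ℕ :=
  Module.finrank K (Submodule.span K ((fun i => fun k : Fin d => L k.succ i) '' I))

/-- `I` is a flat of the matroid `M(L)`. -/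
def IsFlat (K : Type) [Field K] (L : Matrix (Fin (d+1)) ι K) (I : Set ι) : Prop :=
  ∀ i ∉ I, rkL K L I < rkL K L (insert i I)

/-- `C` is a circuit of `M(L)`: a minimal linearly dependent set of columns. -/
def IsCircuit (K : Type) [Field K] (L : Matrix (Fin (d+1)) ι K) (C : Finset ι) : Prop :=
  (¬ LinearIndependent K (fun i : {a // a ∈ C} => fun r => L r i.1)) ∧
  ∀ D : Finset ι, D ⊂ C → LinearIndependent K (fun i : {a // a ∈ D} => fun r => L r i.1)

/-- `M(L)` is connected: there is no separation into two nonempty parts with additive rank. -/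
def MatroidConnected (K : Type) [Field K] (L : Matrix (Fin (d+1)) ι K) : Prop :=
  ∀ S : Set ι, S.Nonempty → Sᶜ.Nonempty → rkL K L S + rkL K L Sᶜ ≠ rkL K L Set.univ

/- ## The reciprocal linear space -/

/-- Zariski closure of a subset of affine space `K^ι`. -/
def zarClosure (K : Type) [Field K] (S : Set (ι → K)) : Set (ι → K) :=
  {v | ∀ f : MvPolynomial ι K, (∀ w ∈ S, MvPolynomial.eval w f = 0) → MvPolynomial.eval v f = 0}

/-- The affine cone over the image of `φ : x ↦ (ℓ_0(x)⁻¹ : ⋯ : ℓ_n(x)⁻¹)`. -/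
def coneImage (L : Matrix (Fin (d+1)) ι ℂ) : Set (ι → ℂ) :=
  {v | ∃ (c : ℂ) (x : Fin d → ℂ), x ∈ complementX L ∧ v = fun i => c / ell ℂ L x i}

/-- The vanishing ideal of a subset of affine space. -/
def vanishingIdeal (K : Type) [Field K] (S : Set (ι → K)) : Ideal (MvPolynomial ι K) where
  carrier := {f | ∀ v ∈ S, MvPolynomial.eval v f = 0}
  add_mem' := by
    intro a b ha hb v hv
    simp [map_add, ha v hv, hb v hv]
  zero_mem' := by intro v hv; simp
  smul_mem' := by
    intro c f hf v hv
    simp [smul_eq_mul, map_mul, hf v hv]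

/-- Projective space `ℙ^n = ℙ(ℂ^ι)`. -/
abbrev Pn (ι : Type) [Fintype ι] := Projectivization ℂ (ι → ℂ)

/-- The reciprocal linear space `ℛ_L ⊂ ℙ^n`, the Zariski closure of `im φ`. -/
def RL (L : Matrix (Fin (d+1)) ι ℂ) : Set (Pn ι) :=
  {p | p.rep ∈ zarClosure ℂ (coneImage L)}

/-- The linear space `𝕃_u = {y : A^⊤ diag(u) y = 0} ⊂ ℙ^n`. -/
def LuSet (L : Matrix (Fin (d+1)) ι ℂ) (u : ι → ℂ) : Set (Pn ι) :=
  {p | ∀ k : Fin d, ∑ i : ι, L k.succ i * u i * p.rep i = 0}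

/-- The torus orbit `U_I = {y ∈ ℙ^n : y_i ≠ 0 ⇔ i ∈ I}`. -/
def Ustratum (I : Set ι) : Set (Pn ι) := {p : Pn ι | ∀ i : ι, p.rep i ≠ 0 ↔ i ∈ I}

/-- `p = φ(x)` for the map `φ : x ↦ (ℓ_0(x)⁻¹ : ⋯ : ℓ_n(x)⁻¹)`. -/
def PhiRel (L : Matrix (Fin (d+1)) ι ℂ) (x : Fin d → ℂ) (p : Pn ι) : Prop :=
  ∃ hv : (fun i => (ell ℂ L x i)⁻¹) ≠ 0, p = Projectivization.mk ℂ (fun i => (ell ℂ L x i)⁻¹) hv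

/-- The image of `φ` in `ℙ^n`. -/
def imPhi (L : Matrix (Fin (d+1)) ι ℂ) : Set (Pn ι) :=
  {p | ∃ x ∈ complementX L, PhiRel L x p}

/-- Complement of the subarrangement `𝒜_I`. -/
def subComplement (L : Matrix (Fin (d+1)) ι ℂ) (I : Set ι) : Set (Fin d → ℂ) :=
  {x | ∀ i ∈ I, ell ℂ L x i ≠ 0}

/-- The affine cone over the image of the reciprocal map of the subarrangement indexed by `I`,
embedded in the coordinate subspace `{y_i = 0, i ∉ I}`. -/
def coneImageSub (L : Matrix (Fin (d+1)) ι ℂ) (I : Set ι) : Set (ι → ℂ) :=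
  {v | ∃ (c : ℂ) (x : Fin d → ℂ), x ∈ subComplement L I ∧
      v = I.indicator (fun i => c / ell ℂ L x i)}

/-- The reciprocal linear space `ℛ_{L_I}` of the submatrix `L_I`, embedded in `ℙ^n`. -/
def RLsub (L : Matrix (Fin (d+1)) ι ℂ) (I : Set ι) : Set (Pn ι) :=
  {p | p.rep ∈ zarClosure ℂ (coneImageSub L I)}

/-- The open stratum `ℛ_{L_I}^∘ = ℛ_{L_I} ∩ U_I`. -/
def RLsubOpen (L : Matrix (Fin (d+1)) ι ℂ) (I : Set ι) : Set (Pn ι) :=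
  RLsub L I ∩ Ustratum I

/- ## The very affine variety `X_I = (ℂ^d ∖ 𝒜_I)/K_I` -/

/-- Quotient of `ℂ^d ∖ 𝒜_I` by translation by the left kernel `K_I` of `A_I^⊤`:
two points are identified iff `A_I^⊤` takes the same values on them. -/
def XIsetoid (L : Matrix (Fin (d+1)) ι ℂ) (I : Set ι) : Setoid ↥(subComplement L I) where
  r x y := ∀ i ∈ I, ∑ k : Fin d, (x : Fin d → ℂ) k * L k.succ i
      = ∑ k : Fin d, (y : Fin d → ℂ) k * L k.succ i
  iseqv := ⟨fun _ _ _ => rfl, fun h i hi => (h i hi).symm, fun h1 h2 i hi => (h1 i hi).trans (h2 i hi)⟩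

/-- The very affine variety `X_I = (ℂ^d ∖ 𝒜_I)/K_I`. -/
def XI (L : Matrix (Fin (d+1)) ι ℂ) (I : Set ι) : Type := Quotient (XIsetoid L I)

instance (L : Matrix (Fin (d+1)) ι ℂ) (I : Set ι) : TopologicalSpace (XI L I) :=
  instTopologicalSpaceQuotient

/-- The complement of the arrangement, over a general field `K`. -/
def complementK (K : Type) [Field K] (L : Matrix (Fin (d+1)) ι K) : Set (Fin d → K) :=
  {x | ∀ i, ell K L x i ≠ 0}

/-- The affine cone over the image of the reciprocal map, over a general field `K`. -/
def coneImageK (K : Type) [Field K] (L : Matrix (Fin (d+1)) ι K) : Set (ι → K) :=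
  {v | ∃ (c : K) (x : Fin d → K), x ∈ complementK K L ∧ v = fun i => c / ell K L x i}

/- ## Hilbert functions, degree, Hilbert regularity -/

/-- The Hilbert function of the graded algebra `K[y]/I`:
`q ↦ dim_K (K[y]/I)_q`. -/
def hilb (K : Type) [Field K] (I : Ideal (MvPolynomial ι K)) (q : ℕ) : ℕ :=
  Module.finrank K ((MvPolynomial.homogeneousSubmodule ι K q).map
    (Ideal.Quotient.mkₐ K I).toLinearMap)

/-- `k` is the degree of the `d`-dimensional projective variety with homogeneous
coordinate ring `K[y]/I`: the Hilbert polynomial has degree `d` and leading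
coefficient `k/d!`. -/
def IsProjDegree (K : Type) [Field K] (I : Ideal (MvPolynomial ι K)) (d k : ℕ) : Prop :=
  ∃ P : Polynomial ℚ, (∃ N : ℕ, ∀ q : ℕ, N ≤ q → Polynomial.eval (q : ℚ) P = hilb K I q) ∧
    P.degree = (d : WithBot ℕ) ∧ P.leadingCoeff = (k : ℚ) / (Nat.factorial d : ℚ)

/-- The Hilbert function, extended by `0` to negative integers. -/
def HFZ (K : Type) [Field K] (I : Ideal (MvPolynomial ι K)) (q : ℤ) : ℕ :=
  if 0 ≤ q then hilb K I q.toNat else 0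

/-- The Hilbert regularity: the smallest degree from which the Hilbert function
agrees with a (necessarily unique) polynomial. -/
def HReg (K : Type) [Field K] (I : Ideal (MvPolynomial ι K)) : ℤ :=
  sInf {i : ℤ | ∃ P : Polynomial ℚ, ∀ q : ℤ, i ≤ q → Polynomial.eval (q : ℚ) P = HFZ K I q}

/- ## Auxiliary lemmas for Varchenko's theorem -/
section VarchenkoAux

variable {d n : ℕ}

lemma continuous_ell (L : Matrix (Fin (d+1)) (Fin (n+1)) ℝ) (i : Fin (n+1)) :
    Continuous fun x : Fin d → ℝ => ell ℝ L x i := by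
  unfold ell
  exact continuous_const.add (continuous_finset_sum _ fun j _ =>
    (continuous_apply j).mul continuous_const)

lemma ell_add_mul {K : Type} [Field K] (L : Matrix (Fin (d+1)) (Fin (n+1)) K)
    (x v : Fin d → K) (t : K) (i : Fin (n+1)) :
    ell K L (fun j => x j + t * v j) i = ell K L x i + t * ∑ j, v j * L j.succ i := by
  simp only [ell, add_mul, Finset.sum_add_distrib, Finset.mul_sum, mul_assoc, add_assoc]

lemma ell_sub (L : Matrix (Fin (d+1)) (Fin (n+1)) ℝ) (x y : Fin d → ℝ) (i : Fin (n+1)) :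
    ∑ j, (y j - x j) * L j.succ i = ell ℝ L y i - ell ℝ L x i := by
  simp only [ell, sub_mul, Finset.sum_sub_distrib]
  ring

/-- From essentiality: the linear parts of the forms span, i.e. a real vector
annihilated by all of them is zero. -/
lemma essential_real (L : Matrix (Fin (d+1)) (Fin (n+1)) ℝ)
    (hEss : IsEssential (L.map Complex.ofReal)) (v : Fin d → ℝ)
    (hv : ∀ i, ∑ k, v k * L k.succ i = 0) : v = 0 := by
  obtain ⟨S, z₀, hS⟩ := hEss
  have hz₀ : ∀ i ∈ S, ell ℂ (L.map Complex.ofReal) z₀ i = 0 := by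
    have : z₀ ∈ ({x : Fin d → ℂ | ∀ i ∈ S, ell ℂ (L.map Complex.ofReal) x i = 0}) := by
      rw [hS]; rfl
    exact this
  have hmem : (fun j => z₀ j + (1:ℂ) * (v j : ℂ)) ∈
      ({x : Fin d → ℂ | ∀ i ∈ S, ell ℂ (L.map Complex.ofReal) x i = 0}) := by
    intro i hi
    rw [ell_add_mul, hz₀ i hi, zero_add]
    have : ∑ j, (v j : ℂ) * (L.map Complex.ofReal) j.succ i
        = ((∑ j, v j * L j.succ i : ℝ) : ℂ) := by
      push_cast [Matrix.map_apply]
      rfl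
    rw [this, hv i]
    simp
  rw [hS] at hmem
  have : ∀ j, (v j : ℂ) = 0 := by
    intro j
    have := congrFun hmem j
    simpa using this
  funext j
  exact_mod_cast this j

/-- Part 1: all complex solutions are real. -/
lemma varchenko_part1 (L : Matrix (Fin (d+1)) (Fin (n+1)) ℝ)
    (hEss : IsEssential (L.map Complex.ofReal))
    (u : Fin (n+1) → ℝ) (hu : ∀ i, 0 < u i)
    (x : Fin d → ℂ) (hx : IsSol (L.map Complex.ofReal) (fun i => (u i : ℂ)) x)
    (j : Fin d) : (x j).im = 0 := by
  set L' := L.map Complex.ofReal with hL'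
  set A : Fin (n+1) → ℂ := fun i => ell ℂ L' x i with hAdef
  have hA : ∀ i, A i ≠ 0 := hx.1
  have heq : ∀ k : Fin d, ∑ i, (u i : ℂ) * L' k.succ i / A i = 0 := hx.2
  set q : Fin d → ℝ := fun k => (x k).im with hqdef
  set c : Fin (n+1) → ℝ := fun i => ∑ k, q k * L k.succ i with hcdef
  -- the imaginary part of `A i` is `c i`
  have him : ∀ i, (A i).im = c i := by
    intro i
    have : (A i).im = ∑ j, (x j * ((L j.succ i : ℝ) : ℂ)).im := by
      simp only [hAdef, ell, hL', Matrix.map_apply, Complex.add_im, Complex.ofReal_im]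
      rw [Complex.im_sum]
      ring
    rw [this]
    simp only [hcdef, Complex.mul_im, Complex.ofReal_im, Complex.ofReal_re, mul_zero, zero_add]
    rfl
  -- the key sum identity
  have hT : ∑ i, ((u i * c i : ℝ) : ℂ) * (A i)⁻¹ = 0 := by
    have h0 : ∑ k, (q k : ℂ) * (∑ i, (u i : ℂ) * L' k.succ i / A i) = 0 := by
      apply Finset.sum_eq_zero
      intro k _
      rw [heq k, mul_zero]
    calc ∑ i, ((u i * c i : ℝ) : ℂ) * (A i)⁻¹
        = ∑ i, ∑ k, (q k : ℂ) * ((u i : ℂ) * L' k.succ i / A i) := by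
          apply Finset.sum_congr rfl
          intro i _
          have : ((c i : ℝ) : ℂ) = ∑ k, (q k : ℂ) * L' k.succ i := by
            simp only [hcdef, hL', Matrix.map_apply]
            push_cast
            rfl
          rw [Complex.ofReal_mul, this, Finset.mul_sum, Finset.sum_mul]
          apply Finset.sum_congr rfl
          intro k _
          field_simp
      _ = ∑ k, (q k : ℂ) * (∑ i, (u i : ℂ) * L' k.succ i / A i) := by
          rw [Finset.sum_comm]
          apply Finset.sum_congr rfl
          intro k _
          rw [Finset.mul_sum]
      _ = 0 := h0
  -- take imaginary parts
  have hIm : ∑ i, u i * c i ^ 2 / Complex.normSq (A i) = 0 := by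
    have := congrArg Complex.im hT
    rw [Complex.im_sum, Complex.zero_im] at this
    have h2 : ∀ i ∈ Finset.univ, (((u i * c i : ℝ) : ℂ) * (A i)⁻¹).im
        = -(u i * c i ^ 2 / Complex.normSq (A i)) := by
      intro i _
      rw [show (((u i * c i : ℝ) : ℂ) * (A i)⁻¹).im = (u i * c i) * ((A i)⁻¹).im by
        simp [Complex.mul_im]]
      rw [Complex.inv_im, him i]
      field_simp
    rw [Finset.sum_congr rfl h2, Finset.sum_neg_distrib] at this
    linarith [neg_eq_zero.mp this]
  -- each term is nonnegative, so each `c i = 0`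
  have hc0 : ∀ i, c i = 0 := by
    intro i
    have hnn : ∀ i ∈ Finset.univ, 0 ≤ u i * c i ^ 2 / Complex.normSq (A i) := by
      intro i _
      apply div_nonneg
      · exact mul_nonneg (hu i).le (sq_nonneg _)
      · exact (Complex.normSq_nonneg _)
    have := (Finset.sum_eq_zero_iff_of_nonneg hnn).mp hIm i (Finset.mem_univ i)
    have hns : Complex.normSq (A i) ≠ 0 := (Complex.normSq_pos.mpr (hA i)).ne'
    have := (div_eq_zero_iff.mp this).resolve_right hns
    rcases mul_eq_zero.mp this with h | h
    · exact absurd h (hu i).ne'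
    · exact pow_eq_zero_iff (by norm_num) |>.mp h
  have hq0 : q = 0 := essential_real L hEss q hc0
  exact congrFun hq0 j

lemma isOpen_complementK (L : Matrix (Fin (d+1)) (Fin (n+1)) ℝ) :
    IsOpen (complementK ℝ L) := by
  have : complementK ℝ L = ⋂ i, {x | ell ℝ L x i ≠ 0} := by
    ext x; simp [complementK, Set.mem_iInter]
  rw [this]
  exact isOpen_iInter_of_finite fun i =>
    isOpen_compl_singleton.preimage (continuous_ell L i)

/-- The chamber of `x₀`, described by sign conditions. -/
def chamberS (L : Matrix (Fin (d+1)) (Fin (n+1)) ℝ) (x₀ : Fin d → ℝ) : Set (Fin d → ℝ) :=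
  {x | ∀ i, 0 < ell ℝ L x i * ell ℝ L x₀ i}

lemma chamberS_subset_complement (L : Matrix (Fin (d+1)) (Fin (n+1)) ℝ) (x₀ : Fin d → ℝ) :
    chamberS L x₀ ⊆ complementK ℝ L := by
  intro x hx i h0
  have := hx i
  rw [h0, zero_mul] at this
  exact lt_irrefl 0 this

lemma mem_chamberS_self (L : Matrix (Fin (d+1)) (Fin (n+1)) ℝ) {x₀ : Fin d → ℝ}
    (hx₀ : x₀ ∈ complementK ℝ L) : x₀ ∈ chamberS L x₀ :=
  fun i => mul_self_pos.mpr (hx₀ i)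

lemma convex_chamberS (L : Matrix (Fin (d+1)) (Fin (n+1)) ℝ) (x₀ : Fin d → ℝ) :
    Convex ℝ (chamberS L x₀) := by
  intro x hx y hy a b ha hb hab
  intro i
  have hcombo : ell ℝ L (a • x + b • y) i
      = ell ℝ L x i + b * (ell ℝ L y i - ell ℝ L x i) := by
    have hfun : a • x + b • y = fun j => x j + b * (y j - x j) := by
      funext j
      simp only [Pi.add_apply, Pi.smul_apply, smul_eq_mul]
      linear_combination x j * hab
    rw [hfun, ell_add_mul, ell_sub]
  rw [hcombo]
  have hp := hx i
  have hq := hy i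
  have hb1 : b ≤ 1 := by linarith
  have hexp : (ell ℝ L x i + b * (ell ℝ L y i - ell ℝ L x i)) * ell ℝ L x₀ i
      = (1 - b) * (ell ℝ L x i * ell ℝ L x₀ i) + b * (ell ℝ L y i * ell ℝ L x₀ i) := by
    ring
  rw [hexp]
  rcases eq_or_lt_of_le hb with h | h
  · rw [← h]; simpa using hp
  · have h1 : 0 < b * (ell ℝ L y i * ell ℝ L x₀ i) := mul_pos h hq
    have h2 : 0 ≤ (1 - b) * (ell ℝ L x i * ell ℝ L x₀ i) :=
      mul_nonneg (by linarith) hp.le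
    linarith

lemma chamberS_eq_component (L : Matrix (Fin (d+1)) (Fin (n+1)) ℝ) {x₀ : Fin d → ℝ}
    (hx₀ : x₀ ∈ complementK ℝ L) :
    chamberS L x₀ = connectedComponentIn (complementK ℝ L) x₀ := by
  apply Set.Subset.antisymm
  · exact (convex_chamberS L x₀).isPreconnected.subset_connectedComponentIn
      (mem_chamberS_self L hx₀) (chamberS_subset_complement L x₀)
  · intro x hx i
    by_contra hle
    push_neg at hle
    have hcont : ContinuousOn (fun z => ell ℝ L z i * ell ℝ L x₀ i)
        (connectedComponentIn (complementK ℝ L) x₀) :=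
      ((continuous_ell L i).mul continuous_const).continuousOn
    have hconn : _root_.IsPreconnected (connectedComponentIn (complementK ℝ L) x₀) :=
      isPreconnected_connectedComponentIn
    have hx₀m : x₀ ∈ connectedComponentIn (complementK ℝ L) x₀ :=
      mem_connectedComponentIn hx₀
    have hIcc := hconn.intermediate_value hx hx₀m hcont
    have h0 : (0:ℝ) ∈ Set.Icc (ell ℝ L x i * ell ℝ L x₀ i) (ell ℝ L x₀ i * ell ℝ L x₀ i) :=
      ⟨hle, (mul_self_pos.mpr (hx₀ i)).le⟩
    obtain ⟨z, hz, hz0⟩ := hIcc h0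
    have hzc := connectedComponentIn_subset (complementK ℝ L) x₀ hz
    rcases mul_eq_zero.mp hz0 with h | h
    · exact hzc i h
    · exact hx₀ i h

/-- Uniqueness of the critical point in a chamber. -/
lemma varchenko_uniq (L : Matrix (Fin (d+1)) (Fin (n+1)) ℝ)
    (hEss : IsEssential (L.map Complex.ofReal))
    (u : Fin (n+1) → ℝ) (hu : ∀ i, 0 < u i) {x₀ : Fin d → ℝ}
    (hx₀ : x₀ ∈ complementK ℝ L)
    {x y : Fin d → ℝ} (hx : x ∈ chamberS L x₀) (hy : y ∈ chamberS L x₀)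
    (hex : ∀ k : Fin d, ∑ i, u i * L k.succ i / ell ℝ L x i = 0)
    (hey : ∀ k : Fin d, ∑ i, u i * L k.succ i / ell ℝ L y i = 0) : x = y := by
  set A : Fin (n+1) → ℝ := fun i => ell ℝ L x i with hAdef
  set B : Fin (n+1) → ℝ := fun i => ell ℝ L y i with hBdef
  have hAne : ∀ i, A i ≠ 0 := chamberS_subset_complement L x₀ hx
  have hBne : ∀ i, B i ≠ 0 := chamberS_subset_complement L x₀ hy
  have hAB : ∀ i, 0 < A i * B i := by
    intro i
    have h1 := hx i
    have h2 := hy i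
    nlinarith [mul_pos h1 h2, sq_nonneg (ell ℝ L x₀ i)]
  have key : ∀ z : Fin d → ℝ,
      (∀ k : Fin d, ∑ i, u i * L k.succ i / ell ℝ L z i = 0) →
      ∑ i, u i * (B i - A i) / ell ℝ L z i = 0 := by
    intro z hzeq
    calc ∑ i, u i * (B i - A i) / ell ℝ L z i
        = ∑ i, ∑ k, (y k - x k) * (u i * L k.succ i / ell ℝ L z i) := by
          apply Finset.sum_congr rfl
          intro i _
          rw [show B i - A i = ∑ k, (y k - x k) * L k.succ i from (ell_sub L x y i).symm,
            Finset.mul_sum, Finset.sum_div]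
          apply Finset.sum_congr rfl
          intro k _
          ring
      _ = ∑ k, (y k - x k) * ∑ i, u i * L k.succ i / ell ℝ L z i := by
          rw [Finset.sum_comm]
          apply Finset.sum_congr rfl
          intro k _
          rw [Finset.mul_sum]
      _ = 0 := Finset.sum_eq_zero fun k _ => by rw [hzeq k, mul_zero]
  have h1 := key x hex
  have h2 := key y hey
  have h3 : ∑ i, u i * (B i - A i) ^ 2 / (A i * B i) = 0 := by
    have hsub : ∑ i, (u i * (B i - A i) / A i - u i * (B i - A i) / B i) = 0 := by
      rw [Finset.sum_sub_distrib, h1, h2, sub_zero]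
    rw [← hsub]
    apply Finset.sum_congr rfl
    intro i _
    have hA := hAne i
    have hB := hBne i
    field_simp
  have hc0 : ∀ i, B i - A i = 0 := by
    intro i
    have hnn : ∀ j ∈ Finset.univ, 0 ≤ u j * (B j - A j) ^ 2 / (A j * B j) :=
      fun j _ => div_nonneg (mul_nonneg (hu j).le (sq_nonneg _)) (hAB j).le
    have hz := (Finset.sum_eq_zero_iff_of_nonneg hnn).mp h3 i (Finset.mem_univ i)
    have := (div_eq_zero_iff.mp hz).resolve_right (hAB i).ne'
    rcases mul_eq_zero.mp this with h | h
    · exact absurd h (hu i).ne'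
    · exact pow_eq_zero_iff (by norm_num) |>.mp h
  have hv : ∀ i, ∑ k, (fun k => y k - x k) k * L k.succ i = 0 := by
    intro i
    rw [ell_sub L x y i]
    exact hc0 i
  have := essential_real L hEss (fun k => y k - x k) hv
  funext j
  have hj := congrFun this j
  simp only [Pi.zero_apply] at hj
  linarith

/-- Existence of a critical point in a bounded chamber. -/
lemma varchenko_exists (L : Matrix (Fin (d+1)) (Fin (n+1)) ℝ)
    (u : Fin (n+1) → ℝ) (hu : ∀ i, 0 < u i) {x₀ : Fin d → ℝ}
    (hx₀ : x₀ ∈ complementK ℝ L)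
    (hb : Bornology.IsBounded (connectedComponentIn (complementK ℝ L) x₀)) :
    ∃ x ∈ connectedComponentIn (complementK ℝ L) x₀,
      ∀ k : Fin d, ∑ i, u i * L k.succ i / ell ℝ L x i = 0 := by
  set C := connectedComponentIn (complementK ℝ L) x₀ with hC
  have hSC : chamberS L x₀ = C := chamberS_eq_component L hx₀
  set g : Fin (n+1) → (Fin d → ℝ) → ℝ := fun i x => ell ℝ L x i * ell ℝ L x₀ i with hg
  have hgc : ∀ i, Continuous (g i) := fun i => (continuous_ell L i).mul continuous_const
  have hgpos : ∀ x ∈ C, ∀ i, 0 < g i x := by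
    intro x hxm i
    rw [← hSC] at hxm
    exact hxm i
  set F : (Fin d → ℝ) → ℝ := fun x => ∑ i, u i * Real.log (g i x) with hF
  have hK : IsCompact (closure C) :=
    Metric.isCompact_of_isClosed_isBounded isClosed_closure hb.closure
  -- upper bounds for the `g i` on the closure
  have hbdd : ∀ i : Fin (n+1), ∃ Bi : ℝ, ∀ x ∈ closure C, g i x ≤ Bi := by
    intro i
    obtain ⟨Bi, hBi⟩ := hK.bddAbove_image (hgc i).continuousOn
    exact ⟨Bi, fun x hxm => hBi (Set.mem_image_of_mem _ hxm)⟩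
  choose Bf hBf using hbdd
  set B : ℝ := 1 + ∑ i, |Bf i| with hBdef
  have hB1 : 1 ≤ B := le_add_of_nonneg_right (Finset.sum_nonneg fun i _ => abs_nonneg _)
  have hgB : ∀ x ∈ closure C, ∀ i, g i x ≤ B := by
    intro x hxm i
    have h1 : g i x ≤ Bf i := hBf i x hxm
    have h2 : |Bf i| ≤ ∑ j, |Bf j| :=
      Finset.single_le_sum (f := fun j => |Bf j|) (fun j _ => abs_nonneg _) (Finset.mem_univ i)
    have h3 : Bf i ≤ |Bf i| := le_abs_self _
    rw [hBdef]
    linarith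
  have hlogB : 0 ≤ Real.log B := Real.log_nonneg hB1
  set U : ℝ := ∑ i, u i with hU
  set umin : ℝ := Finset.univ.inf' Finset.univ_nonempty u with humin
  have huminpos : 0 < umin := (Finset.lt_inf'_iff _).mpr fun i _ => hu i
  have humin_le : ∀ i, umin ≤ u i := fun i => Finset.inf'_le _ (Finset.mem_univ i)
  set m0 : ℝ := Finset.univ.inf' Finset.univ_nonempty
      (fun i => ell ℝ L x₀ i * ell ℝ L x₀ i) with hm0
  have hm0pos : 0 < m0 := (Finset.lt_inf'_iff _).mpr fun i _ => mul_self_pos.mpr (hx₀ i)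
  set ε : ℝ := min (min 1 m0) (Real.exp ((F x₀ - U * Real.log B) / umin - 1)) with hε
  have hεpos : 0 < ε := lt_min (lt_min one_pos hm0pos) (Real.exp_pos _)
  have hε1 : ε ≤ 1 := le_trans (min_le_left _ _) (min_le_left _ _)
  have hεm0 : ε ≤ m0 := le_trans (min_le_left _ _) (min_le_right _ _)
  have hεlog : umin * Real.log ε + U * Real.log B < F x₀ := by
    have hle : Real.log ε ≤ (F x₀ - U * Real.log B) / umin - 1 := by
      calc Real.log ε ≤ Real.log (Real.exp ((F x₀ - U * Real.log B) / umin - 1)) :=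
            Real.log_le_log hεpos (min_le_right _ _)
        _ = (F x₀ - U * Real.log B) / umin - 1 := Real.log_exp _
    have h4 := mul_le_mul_of_nonneg_left hle huminpos.le
    have h5 : umin * ((F x₀ - U * Real.log B) / umin - 1)
        = F x₀ - U * Real.log B - umin := by
      field_simp
    linarith
  set Kε : Set (Fin d → ℝ) := closure C ∩ ⋂ i, {x | ε ≤ g i x} with hKε
  have hKεcl : IsClosed Kε :=
    isClosed_closure.inter (isClosed_iInter fun i => isClosed_le continuous_const (hgc i))
  have hKεcomp : IsCompact Kε := hK.of_isClosed_subset hKεcl Set.inter_subset_left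
  have hx₀C : x₀ ∈ C := mem_connectedComponentIn hx₀
  have hx₀Kε : x₀ ∈ Kε := by
    refine ⟨subset_closure hx₀C, Set.mem_iInter.mpr fun i => ?_⟩
    have : m0 ≤ ell ℝ L x₀ i * ell ℝ L x₀ i := Finset.inf'_le _ (Finset.mem_univ i)
    show ε ≤ g i x₀
    calc ε ≤ m0 := hεm0
      _ ≤ _ := this
  have hKεC : Kε ⊆ C := by
    intro x hxk
    rw [← hSC]
    intro i
    exact lt_of_lt_of_le hεpos (Set.mem_iInter.mp hxk.2 i)
  have hFcont : ContinuousOn F Kε := by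
    apply continuousOn_finset_sum
    intro i _
    apply ContinuousOn.mul continuousOn_const
    intro x hxk
    have hne : g i x ≠ 0 := (lt_of_lt_of_le hεpos (Set.mem_iInter.mp hxk.2 i)).ne'
    exact ((Real.continuousAt_log hne).comp (hgc i).continuousAt).continuousWithinAt
  obtain ⟨xs, hxsK, hxsmax⟩ := hKεcomp.exists_isMaxOn ⟨x₀, hx₀Kε⟩ hFcont
  have hxsC : xs ∈ C := hKεC hxsK
  -- `xs` maximizes `F` over all of `C`
  have hmax : ∀ x ∈ C, F x ≤ F xs := by
    intro x hxC
    by_cases hk : x ∈ Kε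
    · exact hxsmax hk
    · have hxcl : x ∈ closure C := subset_closure hxC
      have hex : ∃ i, g i x < ε := by
        by_contra hcon
        push_neg at hcon
        exact hk ⟨hxcl, Set.mem_iInter.mpr fun i => hcon i⟩
      obtain ⟨i, hi⟩ := hex
      have hFx : F x < F x₀ := by
        have hsplit : F x = u i * Real.log (g i x)
            + ∑ j ∈ Finset.univ.erase i, u j * Real.log (g j x) :=
          (Finset.add_sum_erase _ _ (Finset.mem_univ i)).symm
        have hterm : u i * Real.log (g i x) ≤ umin * Real.log ε := by
          have hlog1 : Real.log (g i x) ≤ Real.log ε :=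
            Real.log_le_log (hgpos x hxC i) hi.le
          have hlogε : Real.log ε ≤ 0 := Real.log_nonpos hεpos.le hε1
          calc u i * Real.log (g i x) ≤ u i * Real.log ε :=
                mul_le_mul_of_nonneg_left hlog1 (hu i).le
            _ ≤ umin * Real.log ε := mul_le_mul_of_nonpos_right (humin_le i) hlogε
        have hrest : ∑ j ∈ Finset.univ.erase i, u j * Real.log (g j x)
            ≤ ∑ j ∈ Finset.univ.erase i, u j * Real.log B := by
          apply Finset.sum_le_sum
          intro j _
          exact mul_le_mul_of_nonneg_left
            (Real.log_le_log (hgpos x hxC j) (hgB x hxcl j)) (hu j).le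
        have hrest2 : ∑ j ∈ Finset.univ.erase i, u j * Real.log B ≤ U * Real.log B := by
          have hUB : U * Real.log B = ∑ j, u j * Real.log B := by
            rw [hU, Finset.sum_mul]
          rw [hUB]
          apply Finset.sum_le_sum_of_subset_of_nonneg (Finset.erase_subset i _)
          intro j _ _
          exact mul_nonneg (hu j).le hlogB
        rw [hsplit]
        linarith [hεlog]
      exact le_trans hFx.le (hxsmax hx₀Kε)
  -- `xs` satisfies the scattering equations
  refine ⟨xs, hxsC, ?_⟩
  intro k
  set A : Fin (n+1) → ℝ := fun i => ell ℝ L xs i with hAdef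
  have hApos : ∀ i, 0 < A i * ell ℝ L x₀ i := hgpos xs hxsC
  have hwne : ∀ i, ell ℝ L x₀ i ≠ 0 := hx₀
  set G : ℝ → ℝ :=
    fun t => ∑ i, u i * Real.log ((A i + t * L k.succ i) * ell ℝ L x₀ i) with hG
  set pt : ℝ → (Fin d → ℝ) := fun t j => xs j + t * (if j = k then 1 else 0) with hpt
  have hptell : ∀ t i, ell ℝ L (pt t) i = A i + t * L k.succ i := by
    intro t i
    show ell ℝ L (fun j => xs j + t * (if j = k then 1 else 0)) i = _
    rw [ell_add_mul]
    congr 1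
    · congr 1
      have hterm : ∀ j : Fin d, (if j = k then (1:ℝ) else 0) * L j.succ i
          = if j = k then L j.succ i else 0 := by
        intro j; split <;> simp
      rw [Finset.sum_congr rfl fun j _ => hterm j]
      simp
  have hGt : ∀ t, G t = F (pt t) := by
    intro t
    apply Finset.sum_congr rfl
    intro i _
    simp only [hg]
    rw [hptell]
  have hpt0 : pt 0 = xs := by funext j; simp [hpt]
  have hCopen : IsOpen C := (isOpen_complementK L).connectedComponentIn
  have hptcont : Continuous pt := by
    apply continuous_pi
    intro j
    exact continuous_const.add (continuous_id.mul continuous_const)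
  have hev : ∀ᶠ t in nhds (0:ℝ), pt t ∈ C := by
    have hmem : pt ⁻¹' C ∈ nhds (0:ℝ) :=
      (hCopen.preimage hptcont).mem_nhds (by rw [Set.mem_preimage, hpt0]; exact hxsC)
    exact hmem
  have hG0 : G 0 = F xs := by rw [hGt 0, hpt0]
  have hlocmax : IsLocalMax G 0 := by
    filter_upwards [hev] with t ht
    calc G t = F (pt t) := hGt t
      _ ≤ F xs := hmax _ ht
      _ = G 0 := hG0.symm
  have hderiv : HasDerivAt G
      (∑ i, u i * ((L k.succ i * ell ℝ L x₀ i) / (A i * ell ℝ L x₀ i))) 0 := by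
    apply HasDerivAt.fun_sum
    intro i _
    have h1 : HasDerivAt (fun t : ℝ => (A i + t * L k.succ i) * ell ℝ L x₀ i)
        (L k.succ i * ell ℝ L x₀ i) 0 := by
      have := (((hasDerivAt_id (0:ℝ)).mul_const (L k.succ i)).const_add (A i)).mul_const
        (ell ℝ L x₀ i)
      simpa using this
    have hne : (A i + (0:ℝ) * L k.succ i) * ell ℝ L x₀ i ≠ 0 := by
      simpa using (hApos i).ne'
    have h2 := h1.log hne
    have h3 := h2.const_mul (u i)
    simpa using h3
  have h0 : ∑ i, u i * ((L k.succ i * ell ℝ L x₀ i) / (A i * ell ℝ L x₀ i)) = 0 := by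
    have hd0 := hlocmax.deriv_eq_zero
    rw [hderiv.deriv] at hd0
    exact hd0
  calc ∑ i, u i * L k.succ i / ell ℝ L xs i
      = ∑ i, u i * ((L k.succ i * ell ℝ L x₀ i) / (A i * ell ℝ L x₀ i)) := by
        apply Finset.sum_congr rfl
        intro i _
        rw [mul_div_mul_right _ _ (hwne i), mul_div_assoc]
    _ = 0 := h0

end VarchenkoAux

/-- Varchenko; Theorem 2.2.  For a real essential arrangement and positive
real `u`, all solutions of the scattering equations are real, and there is exactly one
solution in each bounded chamber of `ℝ^d ∖ 𝒜`. -/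
theorem varchenko_real_solutions
    {d n : ℕ} (L : Matrix (Fin (d+1)) (Fin (n+1)) ℝ)
    (hEss : IsEssential (L.map Complex.ofReal))
    (u : Fin (n+1) → ℝ) (hu : ∀ i, 0 < u i) :
    (∀ x : Fin d → ℂ, IsSol (L.map Complex.ofReal) (fun i => (u i : ℂ)) x →
      ∀ j : Fin d, (x j).im = 0) ∧
    (∀ x₀ ∈ complementK ℝ L, Bornology.IsBounded (connectedComponentIn (complementK ℝ L) x₀) →
      ∃! x : Fin d → ℝ, x ∈ connectedComponentIn (complementK ℝ L) x₀ ∧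
        ∀ k : Fin d, ∑ i : Fin (n+1), u i * L k.succ i / ell ℝ L x i = 0) := by
  constructor
  · exact fun x hx j => varchenko_part1 L hEss u hu x hx j
  · intro x₀ hx₀ hb
    obtain ⟨x, hxC, hxeq⟩ := varchenko_exists L u hu hx₀ hb
    refine ⟨x, ⟨hxC, hxeq⟩, ?_⟩
    rintro y ⟨hyC, hyeq⟩
    exact varchenko_uniq L hEss u hu hx₀
      (by rw [chamberS_eq_component L hx₀]; exact hyC)
      (by rw [chamberS_eq_component L hx₀]; exact hxC) hyeq hxeq

end ScatteringPaper
end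
end

section
/- The polynomials f_C = Σ_{i∈C} α_{C,i} Π_{j∈C∖{i}} y_j, where C ranges over the circuits of the matroid M(L), form a universal Gröbner basis for the vanishing ideal I(ℛ_L) ⊂ ℂ[y_0,…,y_n] of the reciprocal linear space ℛ_L (i.e. they form a Gröbner basis of I(ℛ_L) with respect to every monomial order). -/
open scoped BigOperators
noncomputable section

namespace ScatteringPaper

open CategoryTheory AlgebraicTopology

variable {d : ℕ} {ι : Type} [Fintype ι] [DecidableEq ι]

/-- The circuit polynomial `f_C = ∑_{i ∈ C} α_{C,i} ∏_{j ∈ C ∖ {i}} y_j`. -/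
def circuitPoly {n : ℕ} (α : Finset (Fin (n+1)) → Fin (n+1) → ℂ) (C : Finset (Fin (n+1))) :
    MvPolynomial (Fin (n+1)) ℂ :=
  ∑ i ∈ C, MvPolynomial.C (α C i) * ∏ j ∈ C.erase i, MvPolynomial.X j

/-- `a` is the leading exponent of `f` with respect to the monomial order `m`. -/
def IsLeadExp {σ : Type} (m : MonomialOrder σ) (f : MvPolynomial σ ℂ) (a : σ →₀ ℕ) : Prop :=
  a ∈ f.support ∧ ∀ b ∈ f.support, m.toSyn b ≤ m.toSyn a

/-- The initial (leading term) ideal of `I` with respect to the monomial order `m`. -/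
def leadingTermIdeal {σ : Type} (m : MonomialOrder σ) (I : Ideal (MvPolynomial σ ℂ)) :
    Ideal (MvPolynomial σ ℂ) :=
  Ideal.span {g | ∃ f ∈ I, f ≠ 0 ∧ ∃ a, IsLeadExp m f a ∧ g = MvPolynomial.monomial a 1}

section PSaux
open MvPolynomial
variable {n : ℕ}



variable {d n : ℕ}

/-- The linear form attached to a vector. -/
def linForm {D : ℕ} (w : Fin D → ℂ) : MvPolynomial (Fin D) ℂ :=
  ∑ r, MvPolynomial.C (w r) * MvPolynomial.X r

lemma eval_linForm {D : ℕ} (w : Fin D → ℂ) (z : Fin D → ℂ) :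
    MvPolynomial.eval z (linForm w) = ∑ r, w r * z r := by
  simp [linForm]

lemma coeff_linForm {D : ℕ} (w : Fin D → ℂ) (r : Fin D) :
    MvPolynomial.coeff (Finsupp.single r 1) (linForm w) = w r := by
  classical
  rw [linForm]
  rw [MvPolynomial.coeff_sum]
  rw [Finset.sum_eq_single_of_mem r (Finset.mem_univ r)]
  · simp [MvPolynomial.coeff_C_mul, MvPolynomial.coeff_X]
  · intro s _ hs
    have : MvPolynomial.coeff (Finsupp.single r 1) (MvPolynomial.X (R := ℂ) s) = 0 := by
      rw [MvPolynomial.coeff_X']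
      simp only [ite_eq_right_iff]
      intro h
      exact absurd (Finsupp.single_left_injective one_ne_zero h) hs
    simp [MvPolynomial.coeff_C_mul, this]

lemma linForm_ne_zero {D : ℕ} {w : Fin D → ℂ} (hw : w ≠ 0) : linForm w ≠ 0 := by
  obtain ⟨r, hr⟩ := Function.ne_iff.mp hw
  intro h
  apply hr
  have := coeff_linForm w r
  rw [h] at this
  simpa using this.symm

lemma linForm_sub_smul {D : ℕ} (w u : Fin D → ℂ) (c : ℂ) :
    linForm (w - c • u) = linForm w - MvPolynomial.C c * linForm u := by
  simp only [linForm, Finset.mul_sum]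
  rw [← Finset.sum_sub_distrib]
  apply Finset.sum_congr rfl
  intro r _
  simp only [Pi.sub_apply, Pi.smul_apply, smul_eq_mul, map_sub, map_mul]
  ring

/-- Circuit of a vector configuration, in the same shape as `IsCircuit`. -/
def CircuitV (v : Fin (n+1) → Fin (d+1) → ℂ) (C : Finset (Fin (n+1))) : Prop :=
  (¬ LinearIndependent ℂ (fun i : {a // a ∈ C} => v i.1)) ∧
  ∀ D : Finset (Fin (n+1)), D ⊂ C → LinearIndependent ℂ (fun i : {a // a ∈ D} => v i.1)

lemma notLinIndep_of_rel {v : Fin (n+1) → Fin (d+1) → ℂ} {S : Finset (Fin (n+1))}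
    {β : Fin (n+1) → ℂ} (hrel : ∑ i ∈ S, β i • v i = 0) {j : Fin (n+1)} (hj : j ∈ S)
    (hβj : β j ≠ 0) : ¬ LinearIndependent ℂ (fun i : {a // a ∈ S} => v i.1) := by
  intro hli
  rw [Fintype.linearIndependent_iff] at hli
  have hsum : ∑ i : {a // a ∈ S}, β i.1 • v i.1 = 0 := by
    rw [← Finset.sum_coe_sort S (fun i => β i • v i)] at hrel
    exact hrel
  exact hβj (hli (fun i => β i.1) hsum ⟨j, hj⟩)

lemma rel_of_notLinIndep {v : Fin (n+1) → Fin (d+1) → ℂ} {S : Finset (Fin (n+1))}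
    (h : ¬ LinearIndependent ℂ (fun i : {a // a ∈ S} => v i.1)) :
    ∃ β : Fin (n+1) → ℂ, (∀ i ∉ S, β i = 0) ∧ (∑ i ∈ S, β i • v i = 0) ∧
      ∃ j ∈ S, β j ≠ 0 := by
  classical
  rw [Fintype.linearIndependent_iff] at h
  push_neg at h
  obtain ⟨g, hg0, j, hgj⟩ := h
  refine ⟨fun i => if h : i ∈ S then g ⟨i, h⟩ else 0, fun i hi => dif_neg hi, ?_, j.1, j.2, ?_⟩
  · rw [← Finset.sum_coe_sort S (fun i => (if h : i ∈ S then g ⟨i, h⟩ else 0) • v i)]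
    rw [← hg0]
    apply Finset.sum_congr rfl
    intro i _
    rw [dif_pos i.2]
  · simpa [j.2] using hgj

lemma exists_circuit_subset {v : Fin (n+1) → Fin (d+1) → ℂ} :
    ∀ (N : ℕ) (S : Finset (Fin (n+1))), S.card ≤ N →
    ¬ LinearIndependent ℂ (fun i : {a // a ∈ S} => v i.1) →
    ∃ C, C ⊆ S ∧ CircuitV v C := by
  intro N
  induction N with
  | zero =>
      intro S hS hdep
      exfalso
      rw [Nat.le_zero, Finset.card_eq_zero] at hS
      subst hS
      exact hdep (linearIndependent_empty_type)
  | succ N ih =>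
      intro S hS hdep
      by_cases h : ∀ D : Finset (Fin (n+1)), D ⊂ S →
          LinearIndependent ℂ (fun i : {a // a ∈ D} => v i.1)
      · exact ⟨S, subset_rfl, hdep, h⟩
      · push_neg at h
        obtain ⟨D, hDS, hDdep⟩ := h
        obtain ⟨C, hCD, hC⟩ := ih D (by
          have := Finset.card_lt_card hDS
          omega) hDdep
        exact ⟨C, hCD.trans hDS.subset, hC⟩

lemma circuitV_singleton {v : Fin (n+1) → Fin (d+1) → ℂ} {i : Fin (n+1)} (hv : v i = 0) :
    CircuitV v {i} := by
  constructor
  · apply notLinIndep_of_rel (β := fun _ => 1) (j := i)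
    · simp [hv]
    · exact Finset.mem_singleton_self i
    · exact one_ne_zero
  · intro D hD
    have hDe : D = ∅ := by
      rw [Finset.ssubset_singleton_iff] at hD
      exact hD
    subst hDe
    have : IsEmpty {a // a ∈ (∅ : Finset (Fin (n+1)))} :=
      ⟨fun x => Finset.notMem_empty _ x.2⟩
    exact linearIndependent_empty_type

lemma circuit_nonempty {v : Fin (n+1) → Fin (d+1) → ℂ} {C : Finset (Fin (n+1))}
    (hC : CircuitV v C) : C.Nonempty := by
  rcases Finset.eq_empty_or_nonempty C with h | h
  · exfalso
    subst h
    have : IsEmpty {a // a ∈ (∅ : Finset (Fin (n+1)))} :=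
      ⟨fun x => Finset.notMem_empty _ x.2⟩
    exact hC.1 linearIndependent_empty_type
  · exact h

lemma circuit_ne_singleton {v : Fin (n+1) → Fin (d+1) → ℂ} {C : Finset (Fin (n+1))}
    (hC : CircuitV v C) {t : Fin (n+1)} (hvt : v t ≠ 0) : C ≠ {t} := by
  intro h
  subst h
  apply hC.1
  haveI : Unique {a // a ∈ ({t} : Finset (Fin (n+1)))} :=
    ⟨⟨⟨t, Finset.mem_singleton_self t⟩⟩, fun j => Subtype.ext (Finset.mem_singleton.mp j.2)⟩
  refine linearIndependent_unique_iff.mpr ?_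
  have hd : ((default : {a // a ∈ ({t} : Finset (Fin (n+1)))}) : Fin (n+1)) = t :=
    Finset.mem_singleton.mp (default : {a // a ∈ ({t} : Finset (Fin (n+1)))}).2
  rw [hd]
  exact hvt


/-- The substitution retracting onto the hyperplane `linForm u = 0`. -/
def contrHom {D : ℕ} (u : Fin D → ℂ) (r₀ : Fin D) :
    MvPolynomial (Fin D) ℂ →ₐ[ℂ] MvPolynomial (Fin D) ℂ :=
  MvPolynomial.aeval (fun r => MvPolynomial.X r -
    MvPolynomial.C (if r = r₀ then (u r₀)⁻¹ else 0) * linForm u)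

lemma contrHom_linForm {D : ℕ} (u : Fin D → ℂ) (r₀ : Fin D) (w : Fin D → ℂ) :
    contrHom u r₀ (linForm w) = linForm (w - (w r₀ * (u r₀)⁻¹) • u) := by
  classical
  rw [linForm_sub_smul]
  simp only [linForm, map_sum, map_mul, contrHom]
  simp only [MvPolynomial.aeval_C, MvPolynomial.aeval_X]
  simp only [mul_sub, Finset.sum_sub_distrib]
  congr 1
  rw [Finset.sum_eq_single_of_mem r₀ (Finset.mem_univ r₀)]
  · rw [if_pos rfl, MvPolynomial.algebraMap_eq]
    ring
  · intro s _ hs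
    rw [if_neg hs]
    simp

lemma contrHom_linForm_self {D : ℕ} (u : Fin D → ℂ) (r₀ : Fin D) (hu : u r₀ ≠ 0) :
    contrHom u r₀ (linForm u) = 0 := by
  rw [contrHom_linForm]
  rw [mul_inv_cancel₀ hu]
  simp only [one_smul, sub_self]
  simp [linForm]

/-- Ranking of the variables induced by a monomial order. -/
def rk1 (m : MonomialOrder (Fin (n+1))) (i : Fin (n+1)) : m.syn :=
  m.toSyn (Finsupp.single i 1)

lemma rk1_inj {m : MonomialOrder (Fin (n+1))} {i j : Fin (n+1)}
    (h : rk1 m i = rk1 m j) : i = j := by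
  have := m.toSyn.injective h
  exact (Finsupp.single_left_injective one_ne_zero) this

/-- `a` contains no broken circuit of the configuration `v` within `E`. -/
def NoBC (m : MonomialOrder (Fin (n+1))) (v : Fin (n+1) → Fin (d+1) → ℂ)
    (E : Finset (Fin (n+1))) (a : Fin (n+1) →₀ ℕ) : Prop :=
  ∀ C : Finset (Fin (n+1)), C ⊆ E → CircuitV v C →
    ∀ i₀ ∈ C, (∀ j ∈ C, rk1 m i₀ ≤ rk1 m j) → ¬ (C.erase i₀ ⊆ a.support)

lemma NoBC_mono {m : MonomialOrder (Fin (n+1))} {v : Fin (n+1) → Fin (d+1) → ℂ}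
    {E E' : Finset (Fin (n+1))} (hE : E' ⊆ E) {a : Fin (n+1) →₀ ℕ}
    (h : NoBC m v E a) : NoBC m v E' a :=
  fun C hC => h C (hC.trans hE)

/-- The key transfer of the no-broken-circuit condition under contraction. -/
lemma contr_NoBC {m : MonomialOrder (Fin (n+1))} {v : Fin (n+1) → Fin (d+1) → ℂ}
    {E : Finset (Fin (n+1))} {t : Fin (n+1)} (htE : t ∈ E)
    (htmax : ∀ j ∈ E, rk1 m j ≤ rk1 m t) (hvt : v t ≠ 0)
    {r₀ : Fin (d+1)} (hr₀ : v t r₀ ≠ 0) {a : Fin (n+1) →₀ ℕ} (hat : a t ≠ 0)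
    (hstd : NoBC m v E a) :
    NoBC m (fun i => v i - (v i r₀ * (v t r₀)⁻¹) • v t) (E.erase t) (a.erase t) := by
  classical
  intro C' hC'E hcirc i₀' hi₀' hmin' hsub
  set v' : Fin (n+1) → Fin (d+1) → ℂ := fun i => v i - (v i r₀ * (v t r₀)⁻¹) • v t with hv'
  -- extract a linear relation for C' among the contracted vectors
  obtain ⟨β, hβ0, hβrel, j, hjC', hβj⟩ := rel_of_notLinIndep hcirc.1
  have htC' : t ∉ C' := fun h => (Finset.mem_erase.mp (hC'E h)).1 rfl
  -- turn it into a relation among the original vectors on `insert t C'`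
  set γ : ℂ := ∑ i ∈ C', β i * (v i r₀ * (v t r₀)⁻¹) with hγ
  have hrel2 : ∑ i ∈ C', β i • v i - γ • v t = 0 := by
    have expand : ∑ i ∈ C', β i • v' i = ∑ i ∈ C', β i • v i - γ • v t := by
      rw [hγ, Finset.sum_smul, ← Finset.sum_sub_distrib]
      apply Finset.sum_congr rfl
      intro i _
      rw [hv']
      simp only [smul_sub, smul_smul]
    rw [expand] at hβrel
    exact hβrel
  set βh : Fin (n+1) → ℂ := fun i => if i = t then -γ else β i with hβh
  have hrel3 : ∑ i ∈ insert t C', βh i • v i = 0 := by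
    rw [Finset.sum_insert htC']
    have h1 : βh t = -γ := if_pos rfl
    have h2 : ∀ i ∈ C', βh i • v i = β i • v i := by
      intro i hi
      have : i ≠ t := fun h => htC' (h ▸ hi)
      rw [hβh]
      simp [this]
    rw [Finset.sum_congr rfl h2, h1]
    rw [neg_smul, ← sub_eq_neg_add]
    exact hrel2
  -- find a circuit of `v` inside the support of that relation
  have hdep : ¬ LinearIndependent ℂ (fun i : {x // x ∈ insert t C'} => v i.1) := by
    apply notLinIndep_of_rel hrel3 (Finset.mem_insert_of_mem hjC')
    show βh j ≠ 0
    have : j ≠ t := fun h => htC' (h ▸ hjC')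
    rw [hβh]
    simpa [this] using hβj
  obtain ⟨C, hCsub, hC⟩ := exists_circuit_subset (insert t C').card (insert t C') le_rfl hdep
  have hCE : C ⊆ E := by
    intro i hi
    rcases Finset.mem_insert.mp (hCsub hi) with h | h
    · exact h ▸ htE
    · exact (Finset.mem_erase.mp (hC'E h)).2
  obtain ⟨i₀, hi₀C, hi₀min⟩ := Finset.exists_min_image C (rk1 m) (circuit_nonempty hC)
  -- `i₀ ≠ t`
  have hi₀t : i₀ ≠ t := by
    intro h
    subst h
    have hCne : C ≠ {i₀} := circuit_ne_singleton hC hvt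
    obtain ⟨j₁, hj₁C, hj₁⟩ : ∃ j₁ ∈ C, j₁ ≠ i₀ := by
      by_contra hcon
      push_neg at hcon
      apply hCne
      apply Finset.Subset.antisymm
      · intro x hx
        exact Finset.mem_singleton.mpr (hcon x hx)
      · intro x hx
        rwa [Finset.mem_singleton.mp hx]
    have h1 : rk1 m j₁ ≤ rk1 m i₀ := htmax j₁ (hCE hj₁C)
    have h2 : rk1 m i₀ ≤ rk1 m j₁ := hi₀min j₁ hj₁C
    exact hj₁ (rk1_inj (le_antisymm h1 h2))
  have hi₀C' : i₀ ∈ C' := by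
    rcases Finset.mem_insert.mp (hCsub hi₀C) with h | h
    · exact absurd h hi₀t
    · exact h
  -- the broken circuit of `C` is contained in `a.support`
  have hbc : C.erase i₀ ⊆ a.support := by
    intro j' hj'
    obtain ⟨hj'ne, hj'C⟩ := Finset.mem_erase.mp hj'
    by_cases hjt : j' = t
    · subst hjt
      exact Finsupp.mem_support_iff.mpr hat
    · have hj'C'' : j' ∈ C' := by
        rcases Finset.mem_insert.mp (hCsub hj'C) with h | h
        · exact absurd h hjt
        · exact h
      have hj'i₀' : j' ≠ i₀' := by
        intro h
        have h1 : rk1 m i₀' ≤ rk1 m i₀ := hmin' i₀ hi₀C'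
        have h2 : rk1 m i₀ ≤ rk1 m j' := hi₀min j' hj'C
        rw [h] at h2
        exact hj'ne (h.trans (rk1_inj (le_antisymm h2 h1)).symm)
      have : j' ∈ (a.erase t).support := hsub (Finset.mem_erase.mpr ⟨hj'i₀', hj'C''⟩)
      rw [Finsupp.support_erase] at this
      exact Finset.mem_of_mem_erase this
  exact hstd C hCE hC i₀ hi₀C hi₀min hbc

/-- Base-case helper: the statement over an empty `E`. -/
lemma master_base {v : Fin (n+1) → Fin (d+1) → ℂ}
    {A : Finset ((Fin (n+1)) →₀ ℕ)} {c : ((Fin (n+1)) →₀ ℕ) → ℂ} {N : ℕ}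
    (hsupp : ∀ a ∈ A, a.support ⊆ (∅ : Finset (Fin (n+1))))
    (hG : (∑ a ∈ A, MvPolynomial.C (c a) *
      ∏ i ∈ (∅ : Finset (Fin (n+1))), (linForm (v i)) ^ (N - a i)) = 0) :
    ∀ a ∈ A, c a = 0 := by
  intro a0 ha0
  have hz : ∀ a ∈ A, a = 0 := by
    intro a ha
    have : a.support = ∅ := Finset.subset_empty.mp (hsupp a ha)
    exact Finsupp.support_eq_empty.mp this
  have hA : A = {0} := by
    apply Finset.Subset.antisymm
    · intro x hx
      exact Finset.mem_singleton.mpr (hz x hx)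
    · intro x hx
      rw [Finset.mem_singleton.mp hx]
      rw [← hz a0 ha0]
      exact ha0
  rw [hA] at hG
  rw [Finset.sum_singleton, Finset.prod_empty, mul_one] at hG
  have h0 : c 0 = 0 := by
    have := MvPolynomial.C_injective (Fin (d+1)) ℂ
    have h := this (hG.trans (map_zero (MvPolynomial.C (σ := Fin (d+1)) (R := ℂ))).symm)
    exact h
  rw [hz a0 ha0]
  exact h0

lemma master (m : MonomialOrder (Fin (n+1))) :
    ∀ (nE : ℕ) (nA : ℕ) (E : Finset (Fin (n+1))) (v : Fin (n+1) → Fin (d+1) → ℂ)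
      (A : Finset ((Fin (n+1)) →₀ ℕ)) (c : ((Fin (n+1)) →₀ ℕ) → ℂ) (N : ℕ),
      E.card ≤ nE → A.card ≤ nA →
      (∀ a ∈ A, ∀ i, a i ≤ N) →
      (∀ a ∈ A, a.support ⊆ E) →
      (∀ a ∈ A, NoBC m v E a) →
      (∑ a ∈ A, MvPolynomial.C (c a) * ∏ i ∈ E, (linForm (v i)) ^ (N - a i)) = 0 →
      ∀ a ∈ A, c a = 0 := by
  intro nE
  induction nE with
  | zero =>
      intro nA E v A c N hE hA hbd hsupp hstd hG
      have hEe : E = ∅ := Finset.card_eq_zero.mp (Nat.le_zero.mp hE)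
      subst hEe
      exact master_base hsupp hG
  | succ nE ihE =>
      intro nA
      induction nA with
      | zero =>
          intro E v A c N hE hA hbd hsupp hstd hG a0 ha0
          have : A = ∅ := Finset.card_eq_zero.mp (Nat.le_zero.mp hA)
          subst this
          exact absurd ha0 (Finset.notMem_empty a0)
      | succ nA ihA =>
          intro E v A c N hE hA hbd hsupp hstd hG a0 ha0
          classical
          -- no zero vectors in `E`, else no exponent satisfies `NoBC`
          by_cases hz : ∃ i ∈ E, v i = 0
          · obtain ⟨i, hiE, hvi⟩ := hz
            exfalso
            apply hstd a0 ha0 {i} (Finset.singleton_subset_iff.mpr hiE) (circuitV_singleton hvi)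
              i (Finset.mem_singleton_self i)
              (fun j hj => by rw [Finset.mem_singleton.mp hj])
            rw [Finset.erase_singleton]
            exact Finset.empty_subset _
          push_neg at hz
          by_cases hEe : E = ∅
          · subst hEe
            exact master_base hsupp hG a0 ha0
          have hEne : E.Nonempty := Finset.nonempty_of_ne_empty hEe
          obtain ⟨t, htE, htmax⟩ := Finset.exists_max_image E (rk1 m) hEne
          have hAne : A.Nonempty := ⟨a0, ha0⟩
          set K := A.sup (fun a => a t) with hKdef
          have hKle : ∀ a ∈ A, a t ≤ K := fun a ha => Finset.le_sup (f := fun a => a t) ha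
          obtain ⟨atop, hatop, hatopK⟩ : ∃ a ∈ A, a t = K := by
            obtain ⟨b, hb, he⟩ := Finset.exists_mem_eq_sup A hAne (fun a => a t)
            exact ⟨b, hb, he.symm⟩
          have hKN : K ≤ N := hatopK ▸ hbd atop hatop t
          have hltne : linForm (v t) ≠ 0 := linForm_ne_zero (hz t htE)
          -- factor out the maximal power of `linForm (v t)`
          have hH : (∑ a ∈ A, MvPolynomial.C (c a) * ((linForm (v t)) ^ (K - a t) *
              ∏ i ∈ E.erase t, (linForm (v i)) ^ (N - a i))) = 0 := by
            have hfact : (linForm (v t)) ^ (N - K) *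
                (∑ a ∈ A, MvPolynomial.C (c a) * ((linForm (v t)) ^ (K - a t) *
                  ∏ i ∈ E.erase t, (linForm (v i)) ^ (N - a i)))
                = ∑ a ∈ A, MvPolynomial.C (c a) * ∏ i ∈ E, (linForm (v i)) ^ (N - a i) := by
              rw [Finset.mul_sum]
              apply Finset.sum_congr rfl
              intro a ha
              rw [← Finset.mul_prod_erase E _ htE]
              have harith : (N - K) + (K - a t) = N - a t := by
                have := hKle a ha
                omega
              calc (linForm (v t)) ^ (N - K) * (MvPolynomial.C (c a) *
                    ((linForm (v t)) ^ (K - a t) *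
                      ∏ i ∈ E.erase t, (linForm (v i)) ^ (N - a i)))
                  = MvPolynomial.C (c a) *
                    (((linForm (v t)) ^ (N - K) * (linForm (v t)) ^ (K - a t)) *
                      ∏ i ∈ E.erase t, (linForm (v i)) ^ (N - a i)) := by ring
                _ = MvPolynomial.C (c a) * ((linForm (v t)) ^ (N - a t) *
                      ∏ i ∈ E.erase t, (linForm (v i)) ^ (N - a i)) := by
                    rw [← pow_add, harith]
            have h0 : (linForm (v t)) ^ (N - K) *
                (∑ a ∈ A, MvPolynomial.C (c a) * ((linForm (v t)) ^ (K - a t) *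
                  ∏ i ∈ E.erase t, (linForm (v i)) ^ (N - a i))) = 0 := by
              rw [hfact]
              exact hG
            rcases mul_eq_zero.mp h0 with h | h
            · exact absurd h (pow_ne_zero _ hltne)
            · exact h
          by_cases hK0 : K = 0
          · -- deletion: recurse on `E.erase t` with the same vectors
            have hH' : (∑ a ∈ A, MvPolynomial.C (c a) *
                ∏ i ∈ E.erase t, (linForm (v i)) ^ (N - a i)) = 0 := by
              rw [← hH]
              apply Finset.sum_congr rfl
              intro a ha
              have : K - a t = 0 := by omega
              rw [this, pow_zero, one_mul]
            refine ihE A.card (E.erase t) v A c N ?_ le_rfl hbd ?_ ?_ hH' a0 ha0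
            · rw [Finset.card_erase_of_mem htE]
              omega
            · intro a ha
              rw [Finset.subset_erase]
              refine ⟨hsupp a ha, ?_⟩
              have : a t = 0 := by
                have := hKle a ha
                omega
              simp [Finsupp.mem_support_iff, this]
            · intro a ha
              exact NoBC_mono (Finset.erase_subset t E) (hstd a ha)
          · -- contraction
            have hKpos : 0 < K := Nat.pos_of_ne_zero hK0
            obtain ⟨r₀, hr₀pi⟩ := Function.ne_iff.mp (hz t htE)
            have hr₀ : v t r₀ ≠ 0 := hr₀pi
            set v' : Fin (n+1) → Fin (d+1) → ℂ :=
              fun i => v i - (v i r₀ * (v t r₀)⁻¹) • v t with hv'def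
            have hσC : ∀ x : ℂ, contrHom (v t) r₀ (MvPolynomial.C x) = MvPolynomial.C x := by
              intro x
              rw [← MvPolynomial.algebraMap_eq]
              exact (contrHom (v t) r₀).commutes x
            have hσlin : ∀ i : Fin (n+1),
                contrHom (v t) r₀ (linForm (v i)) = linForm (v' i) :=
              fun i => contrHom_linForm (v t) r₀ (v i)
            have hσt : contrHom (v t) r₀ (linForm (v t)) = 0 :=
              contrHom_linForm_self (v t) r₀ hr₀
            -- apply the contraction substitution to `hH`
            have hσH : (∑ a ∈ A, MvPolynomial.C (c a) *
                ((if a t = K then (1 : MvPolynomial (Fin (d+1)) ℂ) else 0) *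
                  ∏ i ∈ E.erase t, (linForm (v' i)) ^ (N - a i))) = 0 := by
              have h1 := congrArg (contrHom (v t) r₀) hH
              rw [map_zero, map_sum] at h1
              have h2 : (∑ x ∈ A, (contrHom (v t) r₀) (MvPolynomial.C (c x) *
                    (linForm (v t) ^ (K - x t) *
                      ∏ i ∈ E.erase t, linForm (v i) ^ (N - x i))))
                  = ∑ a ∈ A, MvPolynomial.C (c a) *
                      ((if a t = K then (1 : MvPolynomial (Fin (d+1)) ℂ) else 0) *
                        ∏ i ∈ E.erase t, (linForm (v' i)) ^ (N - a i)) := by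
                apply Finset.sum_congr rfl
                intro a ha
                rw [map_mul, map_mul, map_pow, map_prod, hσC, hσt]
                congr 2
                · by_cases haK : a t = K
                  · rw [if_pos haK, haK, Nat.sub_self, pow_zero]
                  · have hne : K - a t ≠ 0 := by
                      have := hKle a ha
                      omega
                    rw [if_neg haK, zero_pow hne]
                · apply Finset.prod_congr rfl
                  intro i _
                  rw [map_pow, hσlin]
              rw [← h2]
              exact h1
            have htopsum : (∑ a ∈ A.filter (fun a => a t = K), MvPolynomial.C (c a) *
                ∏ i ∈ E.erase t, (linForm (v' i)) ^ (N - a i)) = 0 := by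
              have h3 : (∑ a ∈ A.filter (fun a => a t = K), MvPolynomial.C (c a) *
                  ∏ i ∈ E.erase t, (linForm (v' i)) ^ (N - a i))
                  = ∑ a ∈ A, MvPolynomial.C (c a) *
                      ((if a t = K then (1 : MvPolynomial (Fin (d+1)) ℂ) else 0) *
                        ∏ i ∈ E.erase t, (linForm (v' i)) ^ (N - a i)) := by
                rw [Finset.sum_filter]
                apply Finset.sum_congr rfl
                intro a _
                by_cases haK : a t = K
                · rw [if_pos haK, if_pos haK, one_mul]
                · rw [if_neg haK, if_neg haK, zero_mul, mul_zero]
              rw [h3]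
              exact hσH
            -- reindex by erasing `t`
            set A' := (A.filter (fun a => a t = K)).image (fun a => Finsupp.erase t a)
              with hA'def
            set c' : ((Fin (n+1)) →₀ ℕ) → ℂ := fun b => c (b + Finsupp.single t K) with hc'def
            have hrecover : ∀ a ∈ A.filter (fun a => a t = K),
                Finsupp.erase t a + Finsupp.single t K = a := by
              intro a ha
              have haK : a t = K := (Finset.mem_filter.mp ha).2
              rw [← haK]
              exact Finsupp.erase_add_single t a
            have hinj : ∀ x ∈ A.filter (fun a => a t = K), ∀ y ∈ A.filter (fun a => a t = K),
                Finsupp.erase t x = Finsupp.erase t y → x = y := by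
              intro x hx y hy hxy
              have := congrArg (fun b => b + Finsupp.single t K) hxy
              rw [hrecover x hx, hrecover y hy] at this
              exact this
            have hsum' : (∑ b ∈ A', MvPolynomial.C (c' b) *
                ∏ i ∈ E.erase t, (linForm (v' i)) ^ (N - b i)) = 0 := by
              rw [hA'def, Finset.sum_image hinj, ← htopsum]
              apply Finset.sum_congr rfl
              intro a ha
              congr 1
              · rw [hc'def]
                simp only
                rw [hrecover a ha]
              · apply Finset.prod_congr rfl
                intro i hi
                have hit : i ≠ t := (Finset.mem_erase.mp hi).1
                rw [Finsupp.erase_ne hit]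
            have hall' : ∀ b ∈ A', c' b = 0 := by
              refine ihE A'.card (E.erase t) v' A' c' N ?_ le_rfl ?_ ?_ ?_ hsum'
              · rw [Finset.card_erase_of_mem htE]
                omega
              · intro b hb i
                obtain ⟨a, ha, rfl⟩ := Finset.mem_image.mp hb
                by_cases hit : i = t
                · subst hit
                  rw [Finsupp.erase_same]
                  exact Nat.zero_le N
                · rw [Finsupp.erase_ne hit]
                  exact hbd a (Finset.mem_filter.mp ha).1 i
              · intro b hb
                obtain ⟨a, ha, rfl⟩ := Finset.mem_image.mp hb
                rw [Finsupp.support_erase]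
                exact Finset.erase_subset_erase t (hsupp a (Finset.mem_filter.mp ha).1)
              · intro b hb
                obtain ⟨a, ha, rfl⟩ := Finset.mem_image.mp hb
                have haA : a ∈ A := (Finset.mem_filter.mp ha).1
                have haK : a t = K := (Finset.mem_filter.mp ha).2
                have hat : a t ≠ 0 := by omega
                exact contr_NoBC htE htmax (hz t htE) hr₀ hat (hstd a haA)
            have htopzero : ∀ a ∈ A, a t = K → c a = 0 := by
              intro a ha haK
              have hmem : Finsupp.erase t a ∈ A' :=
                Finset.mem_image_of_mem _ (Finset.mem_filter.mpr ⟨ha, haK⟩)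
              have := hall' _ hmem
              rw [hc'def] at this
              simp only at this
              rwa [hrecover a (Finset.mem_filter.mpr ⟨ha, haK⟩)] at this
            by_cases ha0K : a0 t = K
            · exact htopzero a0 ha0 ha0K
            · -- strip the top layer and recurse on the number of exponents
              have hcard'' : (A.filter (fun a => ¬ a t = K)).card ≤ nA := by
                have hss : A.filter (fun a => ¬ a t = K) ⊂ A := by
                  refine ⟨Finset.filter_subset _ _, ?_⟩
                  intro hsub
                  have := hsub hatop
                  rw [Finset.mem_filter] at this
                  exact this.2 hatopK
                have := Finset.card_lt_card hss
                omega
              have hsum'' : (∑ a ∈ A.filter (fun a => ¬ a t = K), MvPolynomial.C (c a) *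
                  ∏ i ∈ E, (linForm (v i)) ^ (N - a i)) = 0 := by
                have hsplit2 := Finset.sum_filter_add_sum_filter_not A (fun a => a t = K)
                  (fun a => MvPolynomial.C (c a) * ∏ i ∈ E, (linForm (v i)) ^ (N - a i))
                have h1 : (∑ a ∈ A.filter (fun a => a t = K), MvPolynomial.C (c a) *
                    ∏ i ∈ E, (linForm (v i)) ^ (N - a i)) = 0 := by
                  apply Finset.sum_eq_zero
                  intro a ha
                  rw [htopzero a (Finset.mem_filter.mp ha).1 (Finset.mem_filter.mp ha).2]
                  rw [map_zero, zero_mul]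
                rw [h1, zero_add] at hsplit2
                rw [hsplit2]
                exact hG
              refine ihA E v (A.filter (fun a => ¬ a t = K)) c N hE hcard''
                (fun a ha => hbd a (Finset.filter_subset _ _ ha))
                (fun a ha => hsupp a (Finset.filter_subset _ _ ha))
                (fun a ha => hstd a (Finset.filter_subset _ _ ha))
                hsum'' a0 ?_
              exact Finset.mem_filter.mpr ⟨ha0, ha0K⟩


/-! Circuit polynomial lemmas -/

/-- The broken-circuit exponent of `C` relative to `i`. -/
def uC (C : Finset (Fin (n+1))) (i : Fin (n+1)) : (Fin (n+1)) →₀ ℕ :=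
  ∑ j ∈ C.erase i, Finsupp.single j 1

lemma uC_apply (C : Finset (Fin (n+1))) (i k : Fin (n+1)) :
    uC C i k = if k ∈ C.erase i then 1 else 0 := by
  classical
  rw [uC, Finsupp.finset_sum_apply]
  rw [Finset.sum_congr rfl (fun j _ => Finsupp.single_apply)]
  exact Finset.sum_ite_eq' (C.erase i) k (fun _ => 1)

lemma prod_X_eq_monomial (s : Finset (Fin (n+1))) :
    (∏ j ∈ s, MvPolynomial.X j : MvPolynomial (Fin (n+1)) ℂ)
      = MvPolynomial.monomial (∑ j ∈ s, Finsupp.single j 1) 1 := by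
  classical
  induction s using Finset.induction with
  | empty => simp
  | insert _ _ hx ih =>
      rw [Finset.prod_insert hx, Finset.sum_insert hx, ih]
      rw [show (MvPolynomial.X _ : MvPolynomial (Fin (n+1)) ℂ) = MvPolynomial.monomial
        (Finsupp.single _ 1) 1 from by rw [← MvPolynomial.X_pow_eq_monomial, pow_one]]
      rw [MvPolynomial.monomial_mul, one_mul]

lemma circuitPoly_eq (α : Finset (Fin (n+1)) → Fin (n+1) → ℂ) (C : Finset (Fin (n+1))) :
    circuitPoly α C = ∑ i ∈ C, MvPolynomial.monomial (uC C i) (α C i) := by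
  rw [circuitPoly]
  apply Finset.sum_congr rfl
  intro i _
  rw [prod_X_eq_monomial, MvPolynomial.C_mul_monomial, mul_one, uC]

lemma uC_ne {C : Finset (Fin (n+1))} {i i' : Fin (n+1)} (hi : i ∈ C) (hi' : i' ∈ C)
    (hne : i ≠ i') : uC C i ≠ uC C i' := by
  intro h
  have h1 := congrArg (fun b : (Fin (n+1)) →₀ ℕ => b i') h
  simp only [uC_apply] at h1
  rw [if_pos (Finset.mem_erase.mpr ⟨hne.symm, hi'⟩), if_neg (Finset.notMem_erase i' C)] at h1
  exact one_ne_zero h1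

lemma coeff_circuitPoly_uC (α : Finset (Fin (n+1)) → Fin (n+1) → ℂ) {C : Finset (Fin (n+1))}
    {i₀ : Fin (n+1)} (hi₀ : i₀ ∈ C) :
    MvPolynomial.coeff (uC C i₀) (circuitPoly α C) = α C i₀ := by
  classical
  rw [circuitPoly_eq, MvPolynomial.coeff_sum]
  rw [Finset.sum_eq_single_of_mem i₀ hi₀]
  · rw [MvPolynomial.coeff_monomial, if_pos rfl]
  · intro i hi hne
    rw [MvPolynomial.coeff_monomial, if_neg]
    exact fun h => uC_ne hi hi₀ hne (by rw [h])

lemma support_circuitPoly {α : Finset (Fin (n+1)) → Fin (n+1) → ℂ} {C : Finset (Fin (n+1))}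
    {b : (Fin (n+1)) →₀ ℕ} (hb : b ∈ (circuitPoly α C).support) :
    ∃ i ∈ C, b = uC C i := by
  classical
  by_contra hcon
  push_neg at hcon
  apply MvPolynomial.mem_support_iff.mp hb
  rw [circuitPoly_eq, MvPolynomial.coeff_sum]
  apply Finset.sum_eq_zero
  intro i hi
  rw [MvPolynomial.coeff_monomial, if_neg]
  exact fun h => hcon i hi h.symm

lemma lead_circuitPoly {m : MonomialOrder (Fin (n+1))}
    {α : Finset (Fin (n+1)) → Fin (n+1) → ℂ} {C : Finset (Fin (n+1))}
    (hnz : ∀ i ∈ C, α C i ≠ 0) {i₀ : Fin (n+1)} (hi₀ : i₀ ∈ C)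
    (hmin : ∀ j ∈ C, rk1 m i₀ ≤ rk1 m j) :
    IsLeadExp m (circuitPoly α C) (uC C i₀) := by
  constructor
  · rw [MvPolynomial.mem_support_iff, coeff_circuitPoly_uC α hi₀]
    exact hnz i₀ hi₀
  · intro b hb
    obtain ⟨i, hiC, rfl⟩ := support_circuitPoly hb
    have hkey : uC C i + Finsupp.single i 1 = uC C i₀ + Finsupp.single i₀ 1 := by
      have h1 : ∀ j ∈ C, (∑ k ∈ C.erase j, Finsupp.single k (1:ℕ)) + Finsupp.single j 1
          = ∑ k ∈ C, Finsupp.single k 1 := by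
        intro j hj
        exact Finset.sum_erase_add C _ hj
      rw [uC, uC, h1 i hiC, h1 i₀ hi₀]
    have h2 : m.toSyn (uC C i) + m.toSyn (Finsupp.single i 1)
        = m.toSyn (uC C i₀) + m.toSyn (Finsupp.single i₀ 1) := by
      rw [← map_add, ← map_add, hkey]
    have h3 : m.toSyn (uC C i) + m.toSyn (Finsupp.single i₀ 1)
        ≤ m.toSyn (uC C i) + m.toSyn (Finsupp.single i 1) :=
      add_le_add_right (hmin i hiC) _
    rw [h2] at h3
    exact le_of_add_le_add_right h3

/-! Membership of circuit polynomials in the vanishing ideal -/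

lemma sum_alpha_ell {L : Matrix (Fin (d+1)) (Fin (n+1)) ℂ}
    {α : Finset (Fin (n+1)) → Fin (n+1) → ℂ} {C : Finset (Fin (n+1))}
    (hrel : ∀ j : Fin (d+1), ∑ i ∈ C, α C i * L j i = 0) (x : Fin d → ℂ) :
    ∑ i ∈ C, α C i * ell ℂ L x i = 0 := by
  have hexp : ∀ i ∈ C, α C i * ell ℂ L x i
      = α C i * L 0 i + ∑ k : Fin d, x k * (α C i * L k.succ i) := by
    intro i _
    rw [ell, mul_add, Finset.mul_sum]
    congr 1
    apply Finset.sum_congr rfl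
    intro k _
    ring
  rw [Finset.sum_congr rfl hexp, Finset.sum_add_distrib, hrel 0, zero_add]
  rw [Finset.sum_comm]
  apply Finset.sum_eq_zero
  intro k _
  rw [← Finset.mul_sum]
  rw [show (∑ i ∈ C, α C i * L k.succ i) = 0 from hrel k.succ, mul_zero]

lemma circuitPoly_eval_zero {L : Matrix (Fin (d+1)) (Fin (n+1)) ℂ}
    {α : Finset (Fin (n+1)) → Fin (n+1) → ℂ} {C : Finset (Fin (n+1))}
    (hrel : ∀ j : Fin (d+1), ∑ i ∈ C, α C i * L j i = 0)
    {v : Fin (n+1) → ℂ} (hv : v ∈ coneImage L) :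
    MvPolynomial.eval v (circuitPoly α C) = 0 := by
  obtain ⟨c, x, hx, rfl⟩ := hv
  rw [circuitPoly, map_sum]
  have heval : ∀ i ∈ C, MvPolynomial.eval (fun i => c / ell ℂ L x i)
      (MvPolynomial.C (α C i) * ∏ j ∈ C.erase i, MvPolynomial.X j)
      = α C i * ∏ j ∈ C.erase i, (c / ell ℂ L x j) := by
    intro i _
    rw [map_mul, MvPolynomial.eval_C, map_prod]
    congr 1
    apply Finset.prod_congr rfl
    intro j _
    rw [MvPolynomial.eval_X]
  rw [Finset.sum_congr rfl heval]
  have hPne : (∏ j ∈ C, ell ℂ L x j) ≠ 0 := by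
    rw [Finset.prod_ne_zero_iff]
    exact fun j _ => hx j
  have hmul : (∑ i ∈ C, α C i * ∏ j ∈ C.erase i, (c / ell ℂ L x j))
      * (∏ j ∈ C, ell ℂ L x j) = 0 := by
    rw [Finset.sum_mul]
    have hterm : ∀ i ∈ C, (α C i * ∏ j ∈ C.erase i, (c / ell ℂ L x j))
        * (∏ j ∈ C, ell ℂ L x j)
        = c ^ (C.card - 1) * (α C i * ell ℂ L x i) := by
      intro i hi
      rw [← Finset.mul_prod_erase C _ hi]
      have hprod : (∏ j ∈ C.erase i, (c / ell ℂ L x j)) * (∏ j ∈ C.erase i, ell ℂ L x j)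
          = c ^ (C.card - 1) := by
        rw [← Finset.prod_mul_distrib]
        rw [Finset.prod_congr rfl (fun j hj => div_mul_cancel₀ c (hx j))]
        rw [Finset.prod_const, Finset.card_erase_of_mem hi]
      calc (α C i * ∏ j ∈ C.erase i, (c / ell ℂ L x j))
            * (ell ℂ L x i * ∏ j ∈ C.erase i, ell ℂ L x j)
          = (α C i * ell ℂ L x i) * ((∏ j ∈ C.erase i, (c / ell ℂ L x j))
            * (∏ j ∈ C.erase i, ell ℂ L x j)) := by ring
        _ = (α C i * ell ℂ L x i) * c ^ (C.card - 1) := by rw [hprod]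
        _ = c ^ (C.card - 1) * (α C i * ell ℂ L x i) := by ring
    rw [Finset.sum_congr rfl hterm, ← Finset.mul_sum, sum_alpha_ell hrel, mul_zero]
  rcases mul_eq_zero.mp hmul with h | h
  · exact h
  · exact absurd h hPne

/-! The key linear-independence statement -/

/-- `x` is a standard exponent: no circuit leading exponent divides it. -/
def StdE (L : Matrix (Fin (d+1)) (Fin (n+1)) ℂ) (α : Finset (Fin (n+1)) → Fin (n+1) → ℂ)
    (m : MonomialOrder (Fin (n+1))) (x : (Fin (n+1)) →₀ ℕ) : Prop :=
  ¬ ∃ C s, IsCircuit ℂ L C ∧ IsLeadExp m (circuitPoly α C) s ∧ s ≤ x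

lemma vanish_std_zero {L : Matrix (Fin (d+1)) (Fin (n+1)) ℂ}
    {α : Finset (Fin (n+1)) → Fin (n+1) → ℂ}
    (hα : ∀ C : Finset (Fin (n+1)), IsCircuit ℂ L C →
      (∀ i ∈ C, α C i ≠ 0) ∧ ∀ j : Fin (d+1), ∑ i ∈ C, α C i * L j i = 0)
    (m : MonomialOrder (Fin (n+1))) (f : MvPolynomial (Fin (n+1)) ℂ)
    (hf : ∀ v ∈ coneImage L, MvPolynomial.eval v f = 0)
    (hstd : ∀ a ∈ f.support, StdE L α m a) : f = 0 := by
  classical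
  by_cases hcol : ∃ i : Fin (n+1), (fun r => L r i) = (0 : Fin (d+1) → ℂ)
  · -- a loop: no exponent is standard, so `f` has empty support
    obtain ⟨i, hi⟩ := hcol
    have hC : IsCircuit ℂ L {i} :=
      circuitV_singleton (v := fun i (r : Fin (d+1)) => L r i) hi
    have he : circuitPoly α {i} = MvPolynomial.C (α {i} i) := by
      rw [circuitPoly, Finset.sum_singleton, Finset.erase_singleton, Finset.prod_empty, mul_one]
    have hαi : α {i} i ≠ 0 := (hα {i} hC).1 i (Finset.mem_singleton_self i)
    have hlead : IsLeadExp m (circuitPoly α {i}) 0 := by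
      constructor
      · rw [MvPolynomial.mem_support_iff, he, MvPolynomial.coeff_zero_C]
        exact hαi
      · intro b hb
        rw [he] at hb
        have hb0 : b = 0 := by
          have hsupp : (MvPolynomial.C (α {i} i) : MvPolynomial (Fin (n+1)) ℂ).support = {0} := by
            rw [show (MvPolynomial.C (α {i} i) : MvPolynomial (Fin (n+1)) ℂ)
              = MvPolynomial.monomial 0 (α {i} i) from by rw [MvPolynomial.monomial_zero']]
            rw [MvPolynomial.support_monomial, if_neg hαi]
          rw [hsupp] at hb
          exact Finset.mem_singleton.mp hb
        rw [hb0]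
    rw [← MvPolynomial.support_eq_empty]
    by_contra hne
    obtain ⟨a, ha⟩ := Finset.nonempty_of_ne_empty hne
    exact hstd a ha ⟨{i}, 0, hC, hlead, Finsupp.le_def.mpr (fun k => Nat.zero_le _)⟩
  · push_neg at hcol
    set colL : Fin (n+1) → Fin (d+1) → ℂ := fun i r => L r i with hcolL
    have hcolnz : ∀ i, colL i ≠ 0 := fun i => hcol i
    set N := f.support.sup (fun a => Finset.univ.sup fun i => a i) with hN
    have hNb : ∀ a ∈ f.support, ∀ i, a i ≤ N := fun a ha i =>
      le_trans (Finset.le_sup (f := fun i => a i) (Finset.mem_univ i))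
        (Finset.le_sup (f := fun a : (Fin (n+1)) →₀ ℕ => Finset.univ.sup fun i => a i) ha)
    set G : MvPolynomial (Fin (d+1)) ℂ := ∑ a ∈ f.support,
      MvPolynomial.C (MvPolynomial.coeff a f) * ∏ i, (linForm (colL i)) ^ (N - a i) with hG
    -- `G` vanishes identically, hence is the zero polynomial
    have hGzero : G = 0 := by
      have hfun : ∀ z : Fin (d+1) → ℂ,
          MvPolynomial.eval z (MvPolynomial.X 0 * ((∏ i, linForm (colL i)) * G)) = 0 := by
        intro z
        rw [map_mul, map_mul]
        by_cases hz0 : z 0 = 0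
        · rw [MvPolynomial.eval_X, hz0, zero_mul]
        by_cases hEz : ∃ i, MvPolynomial.eval z (linForm (colL i)) = 0
        · obtain ⟨i, hi⟩ := hEz
          rw [map_prod, Finset.prod_eq_zero (Finset.mem_univ i) hi, zero_mul, mul_zero]
        push_neg at hEz
        set x : Fin d → ℂ := fun j => z j.succ / z 0 with hx
        have hEix : ∀ i, MvPolynomial.eval z (linForm (colL i)) = z 0 * ell ℂ L x i := by
          intro i
          rw [eval_linForm, ell, Fin.sum_univ_succ]
          rw [mul_add, Finset.mul_sum]
          congr 1
          · rw [hcolL]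
            ring
          · apply Finset.sum_congr rfl
            intro j _
            rw [hx, hcolL]
            simp only
            field_simp
        have hellne : ∀ i, ell ℂ L x i ≠ 0 := by
          intro i h
          exact hEz i (by rw [hEix i, h, mul_zero])
        have hv : (fun i => (z 0)⁻¹ / ell ℂ L x i) ∈ coneImage L := ⟨(z 0)⁻¹, x, hellne, rfl⟩
        have hfv := hf _ hv
        have hvi : ∀ i, (z 0)⁻¹ / ell ℂ L x i = (MvPolynomial.eval z (linForm (colL i)))⁻¹ := by
          intro i
          rw [hEix i, mul_inv, div_eq_mul_inv]
        have hGz : MvPolynomial.eval z G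
            = (∏ i, (MvPolynomial.eval z (linForm (colL i))) ^ N)
              * MvPolynomial.eval (fun i => (z 0)⁻¹ / ell ℂ L x i) f := by
          rw [hG, map_sum, MvPolynomial.eval_eq' (fun i => (z 0)⁻¹ / ell ℂ L x i) f,
            Finset.mul_sum]
          apply Finset.sum_congr rfl
          intro a ha
          rw [map_mul, MvPolynomial.eval_C, map_prod]
          have hfac : ∀ i ∈ (Finset.univ : Finset (Fin (n+1))),
              MvPolynomial.eval z (linForm (colL i) ^ (N - a i))
              = (MvPolynomial.eval z (linForm (colL i))) ^ N
                * ((z 0)⁻¹ / ell ℂ L x i) ^ (a i) := by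
            intro i _
            rw [map_pow, pow_sub₀ _ (hEz i) (hNb a ha i), hvi i, inv_pow]
          rw [Finset.prod_congr rfl hfac, Finset.prod_mul_distrib]
          ring
        rw [hGz, hfv, mul_zero, mul_zero, mul_zero]
      have hpoly : MvPolynomial.X (0 : Fin (d+1)) * ((∏ i, linForm (colL i)) * G) = 0 :=
        MvPolynomial.funext (fun z => by rw [hfun z, map_zero])
      rcases mul_eq_zero.mp hpoly with h | h
      · exact absurd h (MvPolynomial.X_ne_zero 0)
      rcases mul_eq_zero.mp h with h2 | h2
      · exact absurd h2 (Finset.prod_ne_zero_iff.mpr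
          (fun i _ => linForm_ne_zero (hcolnz i)))
      · exact h2
    rw [hG] at hGzero
    have hall := master m Finset.univ.card f.support.card Finset.univ colL f.support
      (fun a => MvPolynomial.coeff a f) N le_rfl le_rfl hNb
      (fun a _ => Finset.subset_univ _) ?_ hGzero
    · rw [← MvPolynomial.support_eq_empty]
      by_contra hne
      obtain ⟨a, ha⟩ := Finset.nonempty_of_ne_empty hne
      exact (MvPolynomial.mem_support_iff.mp ha) (hall a ha)
    · intro a ha C _ hcirc i₀ hi₀C hi₀min hsub
      apply hstd a ha
      have hCc : IsCircuit ℂ L C := hcirc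
      refine ⟨C, uC C i₀, hCc, lead_circuitPoly ((hα C hCc).1) hi₀C hi₀min, ?_⟩
      rw [Finsupp.le_def]
      intro k
      rw [uC_apply]
      by_cases hk : k ∈ C.erase i₀
      · rw [if_pos hk]
        have hk2 := Finsupp.mem_support_iff.mp (hsub hk)
        omega
      · rw [if_neg hk]
        exact Nat.zero_le _

/-! Gröbner reduction -/

lemma reduce {L : Matrix (Fin (d+1)) (Fin (n+1)) ℂ}
    {α : Finset (Fin (n+1)) → Fin (n+1) → ℂ}
    (hα : ∀ C : Finset (Fin (n+1)), IsCircuit ℂ L C →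
      (∀ i ∈ C, α C i ≠ 0) ∧ ∀ j : Fin (d+1), ∑ i ∈ C, α C i * L j i = 0)
    (m : MonomialOrder (Fin (n+1))) (w : m.syn) :
    ∀ f : MvPolynomial (Fin (n+1)) ℂ,
      (∀ v ∈ coneImage L, MvPolynomial.eval v f = 0) →
      ∀ a, MvPolynomial.coeff a f ≠ 0 → StdE L α m a →
      (∀ e ∈ f.support, m.toSyn e ≤ m.toSyn a) →
      (∀ e ∈ f.support, ¬ StdE L α m e → m.toSyn e < w) → False := by
  classical
  refine wellFounded_lt.induction (C := fun w : m.syn => ∀ f : MvPolynomial (Fin (n+1)) ℂ,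
      (∀ v ∈ coneImage L, MvPolynomial.eval v f = 0) →
      ∀ a, MvPolynomial.coeff a f ≠ 0 → StdE L α m a →
      (∀ e ∈ f.support, m.toSyn e ≤ m.toSyn a) →
      (∀ e ∈ f.support, ¬ StdE L α m e → m.toSyn e < w) → False) w ?_
  clear w
  intro w IH
  intro f hf a hca hstda htop hns
  by_cases hNS : (f.support.filter (fun e => ¬ StdE L α m e)) = ∅
  · -- all monomials standard: `f = 0`
    have hstdall : ∀ e ∈ f.support, StdE L α m e := by
      intro e he
      by_contra hc
      exact absurd (Finset.mem_filter.mpr ⟨he, hc⟩) (by rw [hNS]; exact Finset.notMem_empty _)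
    exact hca (by rw [vanish_std_zero hα m f hf hstdall, MvPolynomial.coeff_zero])
  · obtain ⟨b, hbNS, hbmax⟩ := Finset.exists_max_image
      (f.support.filter (fun e => ¬ StdE L α m e)) (fun e => m.toSyn e)
      (Finset.nonempty_of_ne_empty hNS)
    obtain ⟨hbsupp, hbnstd⟩ := Finset.mem_filter.mp hbNS
    obtain ⟨C, s, hC, hlead, hsb⟩ := not_not.mp hbnstd
    have hba : m.toSyn b ≤ m.toSyn a := htop b hbsupp
    have hbnea : b ≠ a := fun h => hbnstd (h ▸ hstda)
    have hbalt : m.toSyn b < m.toSyn a :=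
      lt_of_le_of_ne hba (fun h => hbnea (m.toSyn.injective h))
    set lc := MvPolynomial.coeff s (circuitPoly α C) with hlc_def
    have hlc : lc ≠ 0 := MvPolynomial.mem_support_iff.mp hlead.1
    set δ := b - s with hδ
    have hbs : s + δ = b := add_tsub_cancel_of_le hsb
    set g := circuitPoly α C * MvPolynomial.monomial δ (MvPolynomial.coeff b f / lc) with hg
    have hgvanish : ∀ v ∈ coneImage L, MvPolynomial.eval v g = 0 := by
      intro v hv
      rw [hg, map_mul, circuitPoly_eval_zero (hα C hC).2 hv, zero_mul]
    have hgcoeff : ∀ e, MvPolynomial.coeff e g ≠ 0 → m.toSyn e ≤ m.toSyn b := by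
      intro e he
      rw [hg, MvPolynomial.coeff_mul_monomial'] at he
      by_cases hde : δ ≤ e
      · rw [if_pos hde] at he
        have hmem : (e - δ) ∈ (circuitPoly α C).support := by
          rw [MvPolynomial.mem_support_iff]
          intro h0
          rw [h0, zero_mul] at he
          exact he rfl
        have h1 : m.toSyn (e - δ) ≤ m.toSyn s := hlead.2 _ hmem
        have h2 : (e - δ) + δ = e := tsub_add_cancel_of_le hde
        calc m.toSyn e = m.toSyn ((e - δ) + δ) := by rw [h2]
          _ = m.toSyn (e - δ) + m.toSyn δ := by rw [map_add]
          _ ≤ m.toSyn s + m.toSyn δ := add_le_add_left h1 _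
          _ = m.toSyn (s + δ) := by rw [map_add]
          _ = m.toSyn b := by rw [hbs]
      · rw [if_neg hde] at he
        exact absurd rfl he
    have hgb : MvPolynomial.coeff b g = MvPolynomial.coeff b f := by
      rw [hg, MvPolynomial.coeff_mul_monomial']
      have hdb : δ ≤ b := by
        rw [← hbs]
        exact le_add_self
      rw [if_pos hdb]
      have hbd : b - δ = s := by
        rw [← hbs, add_tsub_cancel_right]
      rw [hbd, ← hlc_def]
      field_simp
    set f' := f - g with hf'
    have hf'van : ∀ v ∈ coneImage L, MvPolynomial.eval v f' = 0 := by
      intro v hv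
      rw [hf', map_sub, hf v hv, hgvanish v hv, sub_zero]
    have hf'b : MvPolynomial.coeff b f' = 0 := by
      rw [hf', MvPolynomial.coeff_sub, hgb, sub_self]
    have hf'supp : ∀ e ∈ f'.support,
        MvPolynomial.coeff e f ≠ 0 ∨ MvPolynomial.coeff e g ≠ 0 := by
      intro e he
      by_contra hcon
      push_neg at hcon
      apply MvPolynomial.mem_support_iff.mp he
      rw [hf', MvPolynomial.coeff_sub, hcon.1, hcon.2, sub_zero]
    have hf'a : MvPolynomial.coeff a f' = MvPolynomial.coeff a f := by
      rw [hf', MvPolynomial.coeff_sub]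
      have : MvPolynomial.coeff a g = 0 := by
        by_contra hag
        exact absurd (hgcoeff a hag) (not_le.mpr hbalt)
      rw [this, sub_zero]
    have htop' : ∀ e ∈ f'.support, m.toSyn e ≤ m.toSyn a := by
      intro e he
      rcases hf'supp e he with h | h
      · exact htop e (MvPolynomial.mem_support_iff.mpr h)
      · exact le_trans (hgcoeff e h) hba
    have hns' : ∀ e ∈ f'.support, ¬ StdE L α m e → m.toSyn e < m.toSyn b := by
      intro e he hnstde
      have hne : e ≠ b := by
        intro h
        subst h
        exact MvPolynomial.mem_support_iff.mp he hf'b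
      have hle : m.toSyn e ≤ m.toSyn b := by
        rcases hf'supp e he with h | h
        · exact hbmax e (Finset.mem_filter.mpr ⟨MvPolynomial.mem_support_iff.mpr h, hnstde⟩)
        · exact hgcoeff e h
      exact lt_of_le_of_ne hle (fun h => hne (m.toSyn.injective h))
    exact IH (m.toSyn b) (hns b hbsupp hbnstd) f' hf'van a (by rwa [hf'a]) hstda htop' hns'

end PSaux

/-- Proudfoot–Speyer; Theorem 2.4.  The circuit polynomials `f_C` form a
universal Gröbner basis of the vanishing ideal `I(ℛ_L)`: they lie in `I(ℛ_L)` and, for every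
monomial order, their leading terms generate the leading term ideal of `I(ℛ_L)`. -/
theorem circuit_polynomials_universal_groebner_basis
    {d n : ℕ} (L : Matrix (Fin (d+1)) (Fin (n+1)) ℂ)
    (α : Finset (Fin (n+1)) → Fin (n+1) → ℂ)
    (hα : ∀ C : Finset (Fin (n+1)), IsCircuit ℂ L C →
      (∀ i ∈ C, α C i ≠ 0) ∧ ∀ j : Fin (d+1), ∑ i ∈ C, α C i * L j i = 0) :
    ∀ m : MonomialOrder (Fin (n+1)),
      (∀ C : Finset (Fin (n+1)), IsCircuit ℂ L C →
        circuitPoly α C ∈ vanishingIdeal ℂ (coneImage L)) ∧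
      leadingTermIdeal m (vanishingIdeal ℂ (coneImage L))
        = Ideal.span {g | ∃ C : Finset (Fin (n+1)), IsCircuit ℂ L C ∧
            ∃ a, IsLeadExp m (circuitPoly α C) a ∧ g = MvPolynomial.monomial a 1} := by
  intro m
  have hmem : ∀ C : Finset (Fin (n+1)), IsCircuit ℂ L C →
      circuitPoly α C ∈ vanishingIdeal ℂ (coneImage L) := by
    intro C hC
    show ∀ v ∈ coneImage L, MvPolynomial.eval v (circuitPoly α C) = 0
    intro v hv
    exact circuitPoly_eval_zero (hα C hC).2 hv
  refine ⟨hmem, ?_⟩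
  have hvan : ∀ f ∈ vanishingIdeal ℂ (coneImage L),
      ∀ v ∈ coneImage L, MvPolynomial.eval v f = 0 := fun f hf => hf
  apply le_antisymm
  · rw [leadingTermIdeal]
    apply Ideal.span_le.mpr
    rintro g ⟨f, hfI, hf0, a, hlead, rfl⟩
    have hnstd : ¬ StdE L α m a := by
      intro hstd
      exact reduce hα m (m.toSyn a) f (hvan f hfI) a
        (MvPolynomial.mem_support_iff.mp hlead.1) hstd hlead.2
        (fun e he hnse => lt_of_le_of_ne (hlead.2 e he)
          (fun h => hnse (by rw [show e = a from m.toSyn.injective h]; exact hstd)))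
    obtain ⟨C, s, hC, hl, hsa⟩ := not_not.mp hnstd
    have hfactor : (MvPolynomial.monomial a 1 : MvPolynomial (Fin (n+1)) ℂ)
        = MvPolynomial.monomial (a - s) 1 * MvPolynomial.monomial s 1 := by
      rw [MvPolynomial.monomial_mul, one_mul]
      congr 1
      rw [tsub_add_cancel_of_le hsa]
    rw [hfactor]
    exact Ideal.mul_mem_left _ _ (Ideal.subset_span ⟨C, hC, s, hl, rfl⟩)
  · apply Ideal.span_le.mpr
    rintro g ⟨C, hC, s, hl, rfl⟩
    rw [leadingTermIdeal]
    apply Ideal.subset_span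
    refine ⟨circuitPoly α C, hmem C hC, ?_, s, hl, rfl⟩
    intro h0
    rw [h0] at hl
    simpa using hl.1

end ScatteringPaper
end
end

section
/- Let I ⊆ {0,…,n}. If I is not a flat of the matroid M(L), then ℛ_L ∩ U_I = ∅. If I is a flat of M(L), then ℛ_L ∩ U_I = ℛ_{L_I}^∘, the open stratum of the reciprocal linear space of the column submatrix L_I. -/
open scoped BigOperators
noncomputable section

namespace ScatteringPaper

open CategoryTheory AlgebraicTopology

variable {d : ℕ} {ι : Type} [Fintype ι] [DecidableEq ι]

/- ## Auxiliary lemmas for the stratification theorem -/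

set_option linter.unusedSectionVars false

open MvPolynomial in
lemma eval_aeval_poly (u : ι → Polynomial ℂ) (f : MvPolynomial ι ℂ) (t : ℂ) :
    Polynomial.eval t (MvPolynomial.aeval u f)
      = MvPolynomial.eval (fun i => Polynomial.eval t (u i)) f := by
  induction f using MvPolynomial.induction_on with
  | C a => simp [Polynomial.algebraMap_eq]
  | add p q hp hq => simp [hp, hq]
  | mul_X p i hp => simp [hp]

open MvPolynomial in
lemma eval_aeval_mv (u : ι → MvPolynomial ι ℂ) (f : MvPolynomial ι ℂ) (w : ι → ℂ) :
    MvPolynomial.eval w (MvPolynomial.aeval u f)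
      = MvPolynomial.eval (fun i => MvPolynomial.eval w (u i)) f := by
  induction f using MvPolynomial.induction_on with
  | C a => simp
  | add p q hp hq => simp only [map_add, hp, hq]
  | mul_X p i hp => simp only [map_mul, MvPolynomial.aeval_X, MvPolynomial.eval_X, hp]

lemma ell_eq_sum (L : Matrix (Fin (d+1)) ι ℂ) (x : Fin d → ℂ) (i : ι) :
    ell ℂ L x i = ∑ r : Fin (d+1), (Fin.cons 1 x : Fin (d+1) → ℂ) r * L r i := by
  rw [Fin.sum_univ_succ]
  simp [ell]

/-- If a column `i` of `L` is a linear combination (given by `μ`) of the columns in the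
support of `μ`, then the same linear relation holds among the values `ℓ_i(x)`. -/
lemma ell_linearCombination (L : Matrix (Fin (d+1)) ι ℂ) (μ : ι →₀ ℂ) (i : ι)
    (hcomb : Finsupp.linearCombination ℂ (fun j => fun r => L r j) μ = fun r => L r i)
    (x : Fin d → ℂ) :
    ∑ j ∈ μ.support, μ j * ell ℂ L x j = ell ℂ L x i := by
  have hrow : ∀ r : Fin (d+1), ∑ j ∈ μ.support, μ j * L r j = L r i := by
    intro r
    have := congrFun hcomb r
    rw [Finsupp.linearCombination_apply, Finsupp.sum] at this
    simpa using this
  calc ∑ j ∈ μ.support, μ j * ell ℂ L x j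
      = ∑ j ∈ μ.support, ∑ r : Fin (d+1), (Fin.cons 1 x : Fin (d+1) → ℂ) r * (μ j * L r j) := by
        apply Finset.sum_congr rfl; intro j _
        rw [ell_eq_sum, Finset.mul_sum]
        apply Finset.sum_congr rfl; intro r _; ring
    _ = ∑ r : Fin (d+1), ∑ j ∈ μ.support, (Fin.cons 1 x : Fin (d+1) → ℂ) r * (μ j * L r j) :=
        Finset.sum_comm
    _ = ∑ r : Fin (d+1), (Fin.cons 1 x : Fin (d+1) → ℂ) r * L r i := by
        apply Finset.sum_congr rfl; intro r _
        rw [← Finset.mul_sum, hrow r]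
    _ = ell ℂ L x i := (ell_eq_sum L x i).symm

lemma stratum_empty_of_not_flat (L : Matrix (Fin (d+1)) ι ℂ) (I : Set ι)
    (hnf : ¬ IsFlat ℂ L I) : RL L ∩ Ustratum I = ∅ := by
  classical
  rw [Set.eq_empty_iff_forall_notMem]
  rintro p ⟨hRL, hU⟩
  simp only [IsFlat, not_forall] at hnf
  obtain ⟨i, hiI, hrk⟩ := hnf
  have hle : Submodule.span ℂ ((fun i => fun r => L r i) '' I)
      ≤ Submodule.span ℂ ((fun i => fun r => L r i) '' (insert i I)) :=
    Submodule.span_mono (Set.image_mono (Set.subset_insert _ _))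
  have heq := Submodule.eq_of_le_of_finrank_le hle (Nat.le_of_not_lt hrk)
  have hmem : (fun r => L r i) ∈ Submodule.span ℂ ((fun i => fun r => L r i) '' I) := by
    rw [heq]
    exact Submodule.subset_span ⟨i, Set.mem_insert _ _, rfl⟩
  obtain ⟨μ, hsupp, hcomb⟩ := (Finsupp.mem_span_image_iff_linearCombination ℂ).mp hmem
  rw [Finsupp.mem_supported] at hsupp
  -- the circuit-style polynomial
  set f : MvPolynomial ι ℂ :=
    (∏ j ∈ μ.support, MvPolynomial.X j) -
      ∑ j ∈ μ.support, MvPolynomial.C (μ j) *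
        (MvPolynomial.X i * ∏ k ∈ μ.support.erase j, MvPolynomial.X k) with hf
  have hvan : ∀ w ∈ coneImage L, MvPolynomial.eval w f = 0 := by
    rintro w ⟨c, x, hx, rfl⟩
    have hell : ∀ m, ell ℂ L x m ≠ 0 := hx
    have hkey : ∑ j ∈ μ.support, μ j * ell ℂ L x j = ell ℂ L x i :=
      ell_linearCombination L μ i hcomb x
    have hsupp_ne : μ.support.Nonempty := by
      rcases Finset.eq_empty_or_nonempty μ.support with h | h
      · exfalso
        apply hell i
        rw [← hkey, h, Finset.sum_empty]
      · exact h
    simp only [hf, map_sub, map_sum, map_prod, map_mul, MvPolynomial.eval_X,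
      MvPolynomial.eval_C]
    rw [sub_eq_zero]
    by_cases hc : c = 0
    · obtain ⟨j0, hj0⟩ := hsupp_ne
      rw [Finset.prod_eq_zero hj0 (by simp [hc]), Finset.sum_eq_zero]
      intro j hj
      simp [hc]
    · have herase : ∀ j ∈ μ.support,
          ∏ k ∈ μ.support.erase j, (c / ell ℂ L x k)
            = (∏ k ∈ μ.support, (c / ell ℂ L x k)) * (ell ℂ L x j / c) := by
        intro j hj
        rw [← Finset.mul_prod_erase _ _ hj, mul_comm (c / ell ℂ L x j), mul_assoc,
          div_mul_div_comm, mul_comm c (ell ℂ L x j),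
          div_self (mul_ne_zero (hell j) hc), mul_one]
      have h1 : ∀ j ∈ μ.support,
          μ j * (c / ell ℂ L x i * ∏ k ∈ μ.support.erase j, (c / ell ℂ L x k))
            = (c / ell ℂ L x i * ∏ k ∈ μ.support, (c / ell ℂ L x k))
                * (μ j * ell ℂ L x j) / c := by
        intro j hj
        rw [herase j hj]
        ring
      rw [Finset.sum_congr rfl h1, ← Finset.sum_div, ← Finset.mul_sum, hkey]
      set P := ∏ k ∈ μ.support, (c / ell ℂ L x k) with hP
      have hi := hell i
      field_simp
    -- done
  have hzero := hRL f hvan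
  have hrepi : p.rep i = 0 := by
    by_contra h
    exact hiI ((hU i).mp h)
  have : MvPolynomial.eval p.rep f = ∏ j ∈ μ.support, p.rep j := by
    simp only [hf, map_sub, map_sum, map_prod, map_mul, MvPolynomial.eval_X,
      MvPolynomial.eval_C, hrepi]
    simp
  rw [this] at hzero
  refine Finset.prod_ne_zero_iff.mpr (fun j hj => ?_) hzero
  exact (hU j).mpr (hsupp hj)

/-- The easy inclusion: a point of `ℛ_L` with support exactly `I` lies in `ℛ_{L_I}`. -/
lemma inter_stratum_subset_sub (L : Matrix (Fin (d+1)) ι ℂ) (I : Set ι) :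
    RL L ∩ Ustratum I ⊆ RLsubOpen L I := by
  classical
  rintro p ⟨hRL, hU⟩
  refine ⟨?_, hU⟩
  intro g hg
  have hrep0 : ∀ m, m ∉ I → p.rep m = 0 := by
    intro m hm
    by_contra h
    exact hm ((hU m).mp h)
  set g' : MvPolynomial ι ℂ :=
    MvPolynomial.aeval (fun m => if m ∈ I then (MvPolynomial.X m : MvPolynomial ι ℂ) else 0) g
    with hg'
  have h1 : ∀ w ∈ coneImage L, MvPolynomial.eval w g' = 0 := by
    rintro w ⟨c, x, hx, rfl⟩
    rw [hg', eval_aeval_mv]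
    have heval : (fun m => MvPolynomial.eval (fun i => c / ell ℂ L x i)
        (if m ∈ I then (MvPolynomial.X m : MvPolynomial ι ℂ) else 0))
        = I.indicator (fun i => c / ell ℂ L x i) := by
      funext m
      by_cases hm : m ∈ I <;> simp [hm, Set.indicator_apply]
    rw [heval]
    exact hg _ ⟨c, x, fun i _ => hx i, rfl⟩
  have h2 := hRL g' h1
  rw [hg', eval_aeval_mv] at h2
  have heval2 : (fun m => MvPolynomial.eval p.rep
      (if m ∈ I then (MvPolynomial.X m : MvPolynomial ι ℂ) else 0)) = p.rep := by
    funext m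
    by_cases hm : m ∈ I <;> simp [hm, hrep0 m]
  rwa [heval2] at h2

/-- For a flat `I` and `j ∉ I` there is a covector `ζ` orthogonal to the columns in `I`
but not to column `j`. -/
lemma exists_zeta_single (L : Matrix (Fin (d+1)) ι ℂ) (I : Set ι) (hf : IsFlat ℂ L I)
    (j : ι) (hj : j ∉ I) :
    ∃ ζ : Fin (d+1) → ℂ, (∀ i ∈ I, ∑ r, ζ r * L r i = 0) ∧ ∑ r, ζ r * L r j ≠ 0 := by
  classical
  set W := Submodule.span ℂ ((fun i => fun r => L r i) '' I) with hW
  have hbj : (fun r => L r j) ∉ W := by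
    intro hmem
    have hspan : Submodule.span ℂ ((fun i => fun r => L r i) '' (insert j I)) = W := by
      rw [Set.image_insert_eq]
      exact Submodule.span_insert_eq_span hmem
    have hrk2 : rkL ℂ L (insert j I) = rkL ℂ L I := by
      unfold rkL
      rw [hspan, hW]
    have h3 := hf j hj
    rw [hrk2] at h3
    exact lt_irrefl _ h3
  -- a functional vanishing on W but not at column j
  have hq : Submodule.Quotient.mk (p := W) (fun r => L r j) ≠ 0 := by
    rwa [ne_eq, Submodule.Quotient.mk_eq_zero]
  obtain ⟨φ₀, hφ₀⟩ := not_forall.mp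
    ((not_iff_not.mpr (Module.forall_dual_apply_eq_zero_iff ℂ
      (Submodule.Quotient.mk (p := W) (fun r => L r j)))).mpr hq)
  set φ : (Fin (d+1) → ℂ) →ₗ[ℂ] ℂ := φ₀.comp W.mkQ with hφ
  have hφW : ∀ w ∈ W, φ w = 0 := by
    intro w hw
    simp only [hφ, LinearMap.comp_apply, Submodule.mkQ_apply]
    rw [(Submodule.Quotient.mk_eq_zero W).mpr hw, map_zero]
  have hφj : φ (fun r => L r j) ≠ 0 := hφ₀
  have hsum : ∀ m, (∑ r, φ (fun r' => if r = r' then 1 else 0) * L r m) = φ (fun r => L r m) := by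
    intro m
    rw [LinearMap.pi_apply_eq_sum_univ φ (fun r => L r m)]
    apply Finset.sum_congr rfl
    intro r _
    rw [smul_eq_mul, mul_comm]
  refine ⟨fun r => φ (fun r' => if r = r' then 1 else 0), ?_, ?_⟩
  · intro i hi
    rw [hsum i]
    exact hφW _ (Submodule.subset_span ⟨i, hi, rfl⟩)
  · rw [hsum j]
    exact hφj

lemma linear_poly_ne_zero (A B : ℂ) (h : A ≠ 0 ∨ B ≠ 0) :
    Polynomial.C B * Polynomial.X + Polynomial.C A ≠ 0 := by
  intro h0
  rcases h with hA | hB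
  · apply hA
    have := congrArg (Polynomial.eval 0) h0
    simpa using this
  · apply hB
    have := congrArg (fun p => Polynomial.coeff p 1) h0
    simpa using this

lemma affine_zero_set_finite (A B : ℂ) (h : A ≠ 0 ∨ B ≠ 0) :
    {ε : ℂ | A + ε * B = 0}.Finite := by
  apply Set.Finite.subset (Polynomial.finite_setOf_isRoot (linear_poly_ne_zero A B h))
  intro ε hε
  rw [Set.mem_setOf_eq] at hε
  simp only [Set.mem_setOf_eq, Polynomial.IsRoot, Polynomial.eval_add, Polynomial.eval_mul,
    Polynomial.eval_C, Polynomial.eval_X]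
  linear_combination hε

/-- For a flat `I` there is a single covector `ζ` orthogonal to the columns in `I`
and non-orthogonal to every column outside `I`. -/
lemma exists_zeta (L : Matrix (Fin (d+1)) ι ℂ) (I : Set ι) (hf : IsFlat ℂ L I) :
    ∃ ζ : Fin (d+1) → ℂ, (∀ i ∈ I, ∑ r, ζ r * L r i = 0) ∧
      (∀ j, j ∉ I → ∑ r, ζ r * L r j ≠ 0) := by
  classical
  suffices h : ∀ S : Finset ι, ∃ ζ : Fin (d+1) → ℂ, (∀ i ∈ I, ∑ r, ζ r * L r i = 0) ∧
      (∀ j ∈ S, j ∉ I → ∑ r, ζ r * L r j ≠ 0) by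
    obtain ⟨ζ, h1, h2⟩ := h Finset.univ
    exact ⟨ζ, h1, fun j hj => h2 j (Finset.mem_univ j) hj⟩
  intro S
  induction S using Finset.induction_on with
  | empty => exact ⟨0, by simp, by simp⟩
  | @insert a S ha ih =>
    obtain ⟨ζ, h1, h2⟩ := ih
    by_cases haI : a ∈ I
    · refine ⟨ζ, h1, ?_⟩
      intro j hj hjI
      rcases Finset.mem_insert.mp hj with rfl | hjS
      · exact absurd haI hjI
      · exact h2 j hjS hjI
    · obtain ⟨ζa, ha1, ha2⟩ := exists_zeta_single L I hf a haI
      set T : Finset ι := (insert a S).filter (· ∉ I) with hT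
      set bad : Set ℂ := ⋃ j ∈ T,
        {ε : ℂ | (∑ r, ζ r * L r j) + ε * (∑ r, ζa r * L r j) = 0} with hbad
      have hfin : bad.Finite := by
        apply Set.Finite.biUnion T.finite_toSet
        intro j hj
        rw [Finset.mem_coe, hT, Finset.mem_filter] at hj
        obtain ⟨hjmem, hjI⟩ := hj
        apply affine_zero_set_finite
        rcases Finset.mem_insert.mp hjmem with rfl | hjS
        · exact Or.inr ha2
        · exact Or.inl (h2 j hjS (by simpa using hjI))
      obtain ⟨ε, hε⟩ := hfin.infinite_compl.nonempty
      rw [Set.mem_compl_iff, hbad, Set.mem_iUnion₂] at hε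
      push_neg at hε
      refine ⟨fun r => ζ r + ε * ζa r, ?_, ?_⟩
      · intro i hi
        have : ∑ r, (ζ r + ε * ζa r) * L r i
            = (∑ r, ζ r * L r i) + ε * (∑ r, ζa r * L r i) := by
          rw [Finset.mul_sum, ← Finset.sum_add_distrib]
          apply Finset.sum_congr rfl
          intro r _
          ring
        rw [this, h1 i hi, ha1 i hi]
        ring
      · intro j hj hjI
        have hsplit : ∑ r, (ζ r + ε * ζa r) * L r j
            = (∑ r, ζ r * L r j) + ε * (∑ r, ζa r * L r j) := by
          rw [Finset.mul_sum, ← Finset.sum_add_distrib]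
          apply Finset.sum_congr rfl
          intro r _
          ring
        rw [hsplit]
        have hjT : j ∈ T := by
          rw [hT, Finset.mem_filter]
          exact ⟨hj, by simpa using hjI⟩
        have := hε j hjT
        rwa [Set.mem_setOf_eq] at this

/-- The one-parameter degeneration lemma: a point of the open reciprocal stratum of `L_I`
lies in the Zariski closure of the cone over the reciprocal image of `L`, provided a
suitable curve of arrangement points exists. -/
lemma curve_mem_zarClosure (L : Matrix (Fin (d+1)) ι ℂ) (I : Set ι)
    (y : Fin d → ℂ) (hy : y ∈ subComplement L I) (c : ℂ) (γ β : ι → ℂ)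
    (hβI : ∀ m ∈ I, β m = 0) (hγI : ∀ m ∈ I, γ m = ell ℂ L y m)
    (hβS : ∀ m, m ∉ I → β m ≠ 0)
    (hx : ∀ t : ℂ, t ≠ 0 → (∀ j, j ∉ I → γ j * t + β j ≠ 0) →
        ∃ (x : Fin d → ℂ) (s : ℂ), s ≠ 0 ∧ ∀ m, ell ℂ L x m = s * (γ m * t + β m)) :
    I.indicator (fun i => c / ell ℂ L y i) ∈ zarClosure ℂ (coneImage L) := by
  classical
  set S : Finset ι := Finset.univ.filter (· ∉ I) with hS
  have hmemS : ∀ m, m ∈ S ↔ m ∉ I := by intro m; simp [hS]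
  set Q : ι → Polynomial ℂ := fun m => Polynomial.C (γ m) * Polynomial.X + Polynomial.C (β m)
    with hQ
  have hevalQ : ∀ m t, Polynomial.eval t (Q m) = γ m * t + β m := by
    intro m t
    simp [hQ]
  set lam : ℂ := ∏ j ∈ S, β j with hlam
  have hlam0 : lam ≠ 0 := Finset.prod_ne_zero_iff.mpr (fun j hj => hβS j ((hmemS j).mp hj))
  set U : ι → Polynomial ℂ := fun m =>
    if m ∈ I then Polynomial.C (c / ell ℂ L y m) * ∏ j ∈ S, Q j
    else Polynomial.C c * (Polynomial.X * ∏ j ∈ S.erase m, Q j) with hU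
  set T : Set ℂ := {t | t ≠ 0 ∧ ∀ j ∈ S, γ j * t + β j ≠ 0} with hT
  have hTinf : T.Infinite := by
    have hfin : ({(0:ℂ)} ∪ ⋃ j ∈ S, {t : ℂ | β j + t * γ j = 0}).Finite := by
      apply (Set.finite_singleton 0).union
      apply Set.Finite.biUnion S.finite_toSet
      intro j hj
      exact affine_zero_set_finite _ _ (Or.inl (hβS j ((hmemS j).mp (Finset.mem_coe.mp hj))))
    apply Set.Infinite.mono _ hfin.infinite_compl
    intro t ht
    rw [Set.mem_compl_iff, Set.mem_union, not_or] at ht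
    obtain ⟨ht0, htU⟩ := ht
    rw [Set.mem_iUnion₂] at htU
    push_neg at htU
    refine ⟨by simpa using ht0, ?_⟩
    intro j hj h
    apply htU j hj
    rw [Set.mem_setOf_eq]
    linear_combination h
  have hmemb : ∀ t ∈ T, (fun m => Polynomial.eval t (U m)) ∈ coneImage L := by
    intro t ht
    obtain ⟨ht0, htQ⟩ := ht
    obtain ⟨x, s, hs0, hellx⟩ := hx t ht0 (fun j hj => htQ j ((hmemS j).mpr hj))
    have hellx0 : ∀ m, ell ℂ L x m ≠ 0 := by
      intro m
      rw [hellx m]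
      by_cases hm : m ∈ I
      · rw [hβI m hm, hγI m hm, add_zero]
        exact mul_ne_zero hs0 (mul_ne_zero (hy m hm) ht0)
      · exact mul_ne_zero hs0 (htQ m ((hmemS m).mpr hm))
    refine ⟨c * t * s * ∏ j ∈ S, (γ j * t + β j), x, hellx0, ?_⟩
    funext m
    by_cases hm : m ∈ I
    · have hUm : Polynomial.eval t (U m)
          = (c / ell ℂ L y m) * ∏ j ∈ S, (γ j * t + β j) := by
        rw [hU]
        simp only [hm, if_pos, Polynomial.eval_mul, Polynomial.eval_C, Polynomial.eval_prod]
        congr 1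
        exact Finset.prod_congr rfl (fun j _ => hevalQ j t)
      rw [hUm, hellx m, hβI m hm, hγI m hm, add_zero]
      have hym := hy m hm
      generalize ∏ j ∈ S, (γ j * t + β j) = P
      field_simp
    · have hmS : m ∈ S := (hmemS m).mpr hm
      have hUm : Polynomial.eval t (U m)
          = c * (t * ∏ j ∈ S.erase m, (γ j * t + β j)) := by
        rw [hU]
        simp only [hm, if_neg, not_false_iff, Polynomial.eval_mul, Polynomial.eval_C,
          Polynomial.eval_X, Polynomial.eval_prod]
        congr 2
        exact Finset.prod_congr rfl (fun j _ => hevalQ j t)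
      rw [hUm, hellx m]
      rw [← Finset.mul_prod_erase _ _ hmS]
      have hQm : γ m * t + β m ≠ 0 := htQ m hmS
      generalize ∏ j ∈ S.erase m, (γ j * t + β j) = P
      rw [eq_div_iff (mul_ne_zero hs0 hQm)]
      ring
  -- now the Zariski-closure argument
  intro f hf
  set g : MvPolynomial ι ℂ :=
    MvPolynomial.aeval (fun m => MvPolynomial.C lam⁻¹ * MvPolynomial.X m) f with hg
  have hgvan : ∀ w ∈ coneImage L, MvPolynomial.eval w g = 0 := by
    rintro w ⟨c0, x, hx0, rfl⟩
    rw [hg, eval_aeval_mv]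
    have : (fun m => MvPolynomial.eval (fun i => c0 / ell ℂ L x i)
        (MvPolynomial.C lam⁻¹ * MvPolynomial.X m))
        = fun i => (lam⁻¹ * c0) / ell ℂ L x i := by
      funext m
      simp [mul_div_assoc]
    rw [this]
    exact hf _ ⟨lam⁻¹ * c0, x, hx0, rfl⟩
  set P : Polynomial ℂ := MvPolynomial.aeval U g with hPdef
  have hP0 : P = 0 := by
    apply Polynomial.eq_zero_of_infinite_isRoot
    apply Set.Infinite.mono _ hTinf
    intro t ht
    have := hgvan _ (hmemb t ht)
    rw [Set.mem_setOf_eq, Polynomial.IsRoot, hPdef, eval_aeval_poly]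
    exact this
  have hz := congrArg (Polynomial.eval 0) hP0
  rw [hPdef, eval_aeval_poly, Polynomial.eval_zero] at hz
  have hU0 : (fun m => Polynomial.eval 0 (U m))
      = fun m => lam * I.indicator (fun i => c / ell ℂ L y i) m := by
    funext m
    by_cases hm : m ∈ I
    · rw [hU]
      simp only [hm, if_pos, Polynomial.eval_mul, Polynomial.eval_C, Polynomial.eval_prod]
      have : ∀ j ∈ S, Polynomial.eval 0 (Q j) = β j := by
        intro j _
        rw [hevalQ]
        ring
      rw [Finset.prod_congr rfl this, Set.indicator_of_mem hm]
      rw [hlam]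
      ring
    · rw [hU]
      simp only [hm, if_neg, not_false_iff, Polynomial.eval_mul, Polynomial.eval_C,
        Polynomial.eval_X]
      rw [Set.indicator_of_notMem hm]
      ring
  rw [hU0, hg, eval_aeval_mv] at hz
  have hfinal : (fun m => MvPolynomial.eval
      (fun m' => lam * I.indicator (fun i => c / ell ℂ L y i) m')
      (MvPolynomial.C lam⁻¹ * MvPolynomial.X m))
      = I.indicator (fun i => c / ell ℂ L y i) := by
    funext m
    simp [inv_mul_cancel_left₀ hlam0]
  rwa [hfinal] at hz

/-- If `I` is a flat, the cone over the open reciprocal stratum of the subarrangement `L_I`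
is contained in the Zariski closure of the cone over the reciprocal image of `L`. -/
lemma coneImageSub_subset_zarClosure (L : Matrix (Fin (d+1)) ι ℂ) (I : Set ι)
    (hflat : IsFlat ℂ L I) :
    coneImageSub L I ⊆ zarClosure ℂ (coneImage L) := by
  rintro v ⟨c, y, hy, rfl⟩
  obtain ⟨ζ, hζI, hζS⟩ := exists_zeta L I hflat
  by_cases h0 : ζ 0 = 0
  · -- degeneration by translation towards infinity
    apply curve_mem_zarClosure L I y hy c (fun m => ell ℂ L y m)
      (fun m => ∑ r, ζ r * L r m)
    · intro m hm
      exact hζI m hm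
    · intro m _
      rfl
    · intro m hm
      exact hζS m hm
    · intro t ht0 _
      refine ⟨fun k => y k + t⁻¹ * ζ k.succ, t⁻¹, inv_ne_zero ht0, ?_⟩
      intro m
      have hβm : (∑ r, ζ r * L r m) = ∑ k : Fin d, ζ k.succ * L k.succ m := by
        rw [Fin.sum_univ_succ, h0, zero_mul, zero_add]
      rw [hβm]
      simp only [ell]
      have hsplit : ∑ k : Fin d, (y k + t⁻¹ * ζ k.succ) * L k.succ m
          = (∑ k : Fin d, y k * L k.succ m) + t⁻¹ * ∑ k : Fin d, ζ k.succ * L k.succ m := by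
        rw [Finset.mul_sum, ← Finset.sum_add_distrib]
        apply Finset.sum_congr rfl
        intro k _
        ring
      rw [hsplit]
      field_simp
      ring
  · -- degeneration towards a generic point of the subspace defined by the flat
    set z : Fin d → ℂ := fun k => (ζ 0)⁻¹ * ζ k.succ with hzdef
    have hz : ∀ m, ell ℂ L z m = (ζ 0)⁻¹ * ∑ r, ζ r * L r m := by
      intro m
      have : (ζ 0)⁻¹ * ∑ r, ζ r * L r m
          = L 0 m + ∑ k : Fin d, ((ζ 0)⁻¹ * ζ k.succ) * L k.succ m := by
        rw [Fin.sum_univ_succ, mul_add, ← mul_assoc, inv_mul_cancel₀ h0,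
          one_mul, Finset.mul_sum]
        congr 1
        apply Finset.sum_congr rfl
        intro k _
        ring
      simp only [ell, hzdef]
      rw [this]
    apply curve_mem_zarClosure L I y hy c (fun m => ell ℂ L y m - ell ℂ L z m)
      (fun m => ell ℂ L z m)
    · intro m hm
      rw [hz m, hζI m hm, mul_zero]
    · intro m hm
      rw [hz m, hζI m hm, mul_zero, sub_zero]
    · intro m hm
      rw [hz m]
      exact mul_ne_zero (inv_ne_zero h0) (hζS m hm)
    · intro t ht0 _
      refine ⟨fun k => z k + t * (y k - z k), 1, one_ne_zero, ?_⟩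
      intro m
      simp only [ell]
      have hsplit : ∑ k : Fin d, (z k + t * (y k - z k)) * L k.succ m
          = (∑ k : Fin d, z k * L k.succ m)
            + t * ((∑ k : Fin d, y k * L k.succ m) - ∑ k : Fin d, z k * L k.succ m) := by
        rw [mul_sub, Finset.mul_sum, Finset.mul_sum, ← Finset.sum_sub_distrib,
          ← Finset.sum_add_distrib]
        apply Finset.sum_congr rfl
        intro k _
        ring
      rw [hsplit]
      ring

/-- Proudfoot–Speyer stratification; Proposition 3.1.  If `I` is not a flat
of `M(L)` then `ℛ_L ∩ U_I = ∅`; if `I` is a flat then `ℛ_L ∩ U_I = ℛ_{L_I}^∘`. -/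
theorem reciprocal_space_stratification
    {d n : ℕ} (L : Matrix (Fin (d+1)) (Fin (n+1)) ℂ) (I : Set (Fin (n+1))) :
    (¬ IsFlat ℂ L I → RL L ∩ Ustratum I = ∅) ∧
    (IsFlat ℂ L I → RL L ∩ Ustratum I = RLsubOpen L I) := by
  refine ⟨stratum_empty_of_not_flat L I, ?_⟩
  intro hflat
  apply Set.Subset.antisymm (inter_stratum_subset_sub L I)
  rintro p ⟨hsub, hU⟩
  refine ⟨?_, hU⟩
  intro f hf
  exact hsub f (fun w hw => coneImageSub_subset_zarClosure L I hflat hw f hf)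

end ScatteringPaper
end
end

section
/- If rank L = d+1 and u ∈ ℂ^{n+1} is generic, then 𝕃_u ∩ im φ = 𝕃_u ∩ ℛ_L^∘; that is, the solutions of the scattering equations are in one-to-one correspondence (via φ) with the intersection points of the linear space 𝕃_u with the dense stratum ℛ_L^∘ = ℛ_L ∩ U_{{0,…,n}} of the reciprocal linear space. -/
open scoped BigOperators
noncomputable section

namespace ScatteringPaper

open CategoryTheory AlgebraicTopology

variable {d : ℕ} {ι : Type} [Fintype ι] [DecidableEq ι]

/- ## Auxiliary lemmas for Statement 5 -/

section Aux

open Matrix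

variable {d n : ℕ}

/-- If `z` is orthogonal to the kernel of `M`, it lies in the row space of `M`. -/
lemma dot_ker_imp_rowspace {m k : ℕ} (M : Matrix (Fin m) (Fin k) ℂ) (z : Fin k → ℂ)
    (h : ∀ lam : Fin k → ℂ, M.mulVec lam = 0 → ∑ i, z i * lam i = 0) :
    ∃ w : Fin m → ℂ, ∀ i, z i = ∑ r, w r * M r i := by
  by_contra hc
  push_neg at hc
  have hz : z ∉ LinearMap.range (Matrix.mulVecLin Mᵀ) := by
    rintro ⟨w, rfl⟩
    obtain ⟨i, hi⟩ := hc w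
    apply hi
    simp only [Matrix.mulVecLin_apply, Matrix.mulVec, dotProduct,
      Matrix.transpose_apply]
    exact Finset.sum_congr rfl fun r _ => mul_comm _ _
  set W := LinearMap.range (Matrix.mulVecLin Mᵀ) with hW
  have hq : W.mkQ z ≠ 0 := by
    rwa [Submodule.mkQ_apply, ne_eq, Submodule.Quotient.mk_eq_zero]
  obtain ⟨φ, hφ⟩ : ∃ φ : Module.Dual ℂ ((Fin k → ℂ) ⧸ W), φ (W.mkQ z) ≠ 0 := by
    by_contra hall
    push_neg at hall
    exact hq ((Module.forall_dual_apply_eq_zero_iff ℂ _).mp hall)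
  set f : (Fin k → ℂ) →ₗ[ℂ] ℂ := φ.comp W.mkQ with hf
  have hfW : ∀ v ∈ W, f v = 0 := by
    intro v hv
    simp [hf, Submodule.mkQ_apply, (Submodule.Quotient.mk_eq_zero W).mpr hv]
  set lam : Fin k → ℂ := fun i => f (fun j => if i = j then 1 else 0) with hlamdef
  have hml : M.mulVec lam = 0 := by
    funext r
    have hrow : (fun i => M r i) ∈ W := by
      refine ⟨fun s => if r = s then 1 else 0, ?_⟩
      funext i
      simp [Matrix.mulVecLin_apply, Matrix.mulVec, Matrix.vecMul, dotProduct,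
        Matrix.transpose_apply]
    have h1 : f (fun i => M r i) = 0 := hfW _ hrow
    have h2 : f (fun i => M r i) = ∑ i, M r i * lam i := by
      rw [LinearMap.pi_apply_eq_sum_univ f (fun i => M r i)]
      exact Finset.sum_congr rfl fun i _ => by rw [smul_eq_mul]
    simp only [Matrix.mulVec, dotProduct, Pi.zero_apply]
    rw [← h2, h1]
  have hzero := h lam hml
  apply hφ
  have h3 : f z = ∑ i, z i * lam i := by
    rw [LinearMap.pi_apply_eq_sum_univ f z]
    exact Finset.sum_congr rfl fun i _ => by rw [smul_eq_mul]
  have : f z = 0 := by rw [h3, hzero]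
  simpa [hf] using this

/-- A linear relation among the columns of `L` gives a linear relation among the `ℓ_i(x)`. -/
lemma sum_lam_ell (L : Matrix (Fin (d+1)) (Fin (n+1)) ℂ) (lam : Fin (n+1) → ℂ)
    (hlam : ∀ r, ∑ i, lam i * L r i = 0) (x : Fin d → ℂ) :
    ∑ i, lam i * ell ℂ L x i = 0 := by
  have hterm : ∀ i : Fin (n+1),
      lam i * ell ℂ L x i = lam i * L 0 i + ∑ j : Fin d, x j * (lam i * L j.succ i) := by
    intro i
    simp only [ell, mul_add, Finset.mul_sum]
    congr 1
    exact Finset.sum_congr rfl fun j _ => by ring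
  calc ∑ i, lam i * ell ℂ L x i
      = ∑ i, (lam i * L 0 i + ∑ j : Fin d, x j * (lam i * L j.succ i)) :=
        Finset.sum_congr rfl fun i _ => hterm i
    _ = (∑ i, lam i * L 0 i) + ∑ i, ∑ j : Fin d, x j * (lam i * L j.succ i) :=
        Finset.sum_add_distrib
    _ = 0 + ∑ j : Fin d, ∑ i, x j * (lam i * L j.succ i) := by rw [hlam 0, Finset.sum_comm]
    _ = ∑ j : Fin d, x j * ∑ i, lam i * L j.succ i := by
        rw [zero_add]
        exact Finset.sum_congr rfl fun j _ => (Finset.mul_sum _ _ _).symm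
    _ = 0 := by
        refine Finset.sum_eq_zero fun j _ => ?_
        rw [hlam j.succ, mul_zero]

/-- Points of the Zariski closure of the cone over `im φ` with all coordinates nonzero
satisfy, after coordinatewise inversion, all linear relations among the columns of `L`. -/
lemma zar_inv_relation (L : Matrix (Fin (d+1)) (Fin (n+1)) ℂ) (y : Fin (n+1) → ℂ)
    (hy : y ∈ zarClosure ℂ (coneImage L)) (hynz : ∀ i, y i ≠ 0)
    (lam : Fin (n+1) → ℂ) (hlam : ∀ r, ∑ i, lam i * L r i = 0) :
    ∑ i, lam i * (y i)⁻¹ = 0 := by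
  set f : MvPolynomial (Fin (n+1)) ℂ :=
    ∑ i, MvPolynomial.C (lam i) * ∏ j ∈ Finset.univ.erase i, MvPolynomial.X j with hfdef
  have heval : ∀ w : Fin (n+1) → ℂ,
      MvPolynomial.eval w f = ∑ i, lam i * ∏ j ∈ Finset.univ.erase i, w j := by
    intro w
    simp [hfdef]
  have hvan : ∀ w ∈ coneImage L, MvPolynomial.eval w f = 0 := by
    rintro w ⟨c, x, hx, rfl⟩
    rw [heval]
    have hterm : ∀ i : Fin (n+1),
        lam i * ∏ j ∈ Finset.univ.erase i, (c / ell ℂ L x j)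
          = (c ^ n * ∏ j, (ell ℂ L x j)⁻¹) * (lam i * ell ℂ L x i) := by
      intro i
      have h1 : (ell ℂ L x i)⁻¹ * ∏ j ∈ Finset.univ.erase i, (ell ℂ L x j)⁻¹
          = ∏ j, (ell ℂ L x j)⁻¹ :=
        Finset.mul_prod_erase Finset.univ (fun j => (ell ℂ L x j)⁻¹) (Finset.mem_univ i)
      have h2 : ∏ j ∈ Finset.univ.erase i, (ell ℂ L x j)⁻¹
          = ell ℂ L x i * ∏ j, (ell ℂ L x j)⁻¹ := by
        rw [← h1, ← mul_assoc, mul_inv_cancel₀ (hx i), one_mul]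
      have h3 : ∏ j ∈ Finset.univ.erase i, (c / ell ℂ L x j)
          = c ^ n * ∏ j ∈ Finset.univ.erase i, (ell ℂ L x j)⁻¹ := by
        simp only [div_eq_mul_inv]
        rw [Finset.prod_mul_distrib, Finset.prod_const,
          Finset.card_erase_of_mem (Finset.mem_univ i), Finset.card_univ, Fintype.card_fin]
        rfl
      rw [h3, h2]; ring
    calc ∑ i, lam i * ∏ j ∈ Finset.univ.erase i, (c / ell ℂ L x j)
        = ∑ i, (c ^ n * ∏ j, (ell ℂ L x j)⁻¹) * (lam i * ell ℂ L x i) :=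
          Finset.sum_congr rfl fun i _ => hterm i
      _ = (c ^ n * ∏ j, (ell ℂ L x j)⁻¹) * ∑ i, lam i * ell ℂ L x i :=
          (Finset.mul_sum _ _ _).symm
      _ = 0 := by rw [sum_lam_ell L lam hlam x, mul_zero]
  have h0 : MvPolynomial.eval y f = 0 := hy f hvan
  rw [heval] at h0
  have hterm : ∀ i : Fin (n+1),
      lam i * ∏ j ∈ Finset.univ.erase i, y j = (lam i * (y i)⁻¹) * ∏ j, y j := by
    intro i
    have h1 : y i * ∏ j ∈ Finset.univ.erase i, y j = ∏ j, y j :=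
      Finset.mul_prod_erase Finset.univ (fun j => y j) (Finset.mem_univ i)
    have h2 : ∏ j ∈ Finset.univ.erase i, y j = (y i)⁻¹ * ∏ j, y j := by
      rw [← h1, ← mul_assoc, inv_mul_cancel₀ (hynz i), one_mul]
    rw [h2]; ring
  rw [Finset.sum_congr rfl (fun i _ => hterm i), ← Finset.sum_mul] at h0
  have hprod : (∏ j, y j) ≠ 0 := Finset.prod_ne_zero_iff.mpr fun j _ => hynz j
  exact (mul_eq_zero.mp h0).resolve_right hprod

/-- Full row rank implies the rows of `L` are linearly independent. -/
lemma rows_indep (L : Matrix (Fin (d+1)) (Fin (n+1)) ℂ) (hrank : L.rank = d + 1)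
    (v : Fin (d+1) → ℂ) (hv : ∀ i, ∑ r, v r * L r i = 0) : v = 0 := by
  have hker : v ∈ LinearMap.ker (Matrix.mulVecLin Lᵀ) := by
    rw [LinearMap.mem_ker]
    funext i
    have := hv i
    simp only [Matrix.mulVecLin_apply, Matrix.mulVec, dotProduct,
      Matrix.transpose_apply, Pi.zero_apply]
    rw [← this]
    exact Finset.sum_congr rfl fun r _ => mul_comm _ _
  have hrk : Module.finrank ℂ (LinearMap.range (Matrix.mulVecLin Lᵀ)) = d + 1 := by
    have : Lᵀ.rank = d + 1 := by rw [Matrix.rank_transpose, hrank]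
    exact this
  have hrn := LinearMap.finrank_range_add_finrank_ker (Matrix.mulVecLin Lᵀ)
  rw [hrk, Module.finrank_fin_fun] at hrn
  have hk0 : Module.finrank ℂ (LinearMap.ker (Matrix.mulVecLin Lᵀ)) = 0 := by omega
  have : LinearMap.ker (Matrix.mulVecLin Lᵀ) = ⊥ := Submodule.finrank_eq_zero.mp hk0
  rw [this, Submodule.mem_bot] at hker
  exact hker

/-- Extract a representative description from `PhiRel`. -/
lemma phirel_rep (L : Matrix (Fin (d+1)) (Fin (n+1)) ℂ) {x : Fin d → ℂ}
    {p : Pn (Fin (n+1))} (h : PhiRel L x p) :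
    ∃ c : ℂ, c ≠ 0 ∧ ∀ i, p.rep i = c * (ell ℂ L x i)⁻¹ := by
  obtain ⟨hv, rfl⟩ := h
  obtain ⟨a, ha⟩ := Projectivization.exists_smul_eq_mk_rep ℂ _ hv
  refine ⟨(a : ℂ), a.ne_zero, fun i => ?_⟩
  rw [← ha]
  simp [Units.smul_def]

/-- The image of `φ` is contained in `ℛ_L ∩ U_{{0,…,n}}`. -/
lemma imPhi_subset (L : Matrix (Fin (d+1)) (Fin (n+1)) ℂ) :
    imPhi L ⊆ RL L ∩ Ustratum (Set.univ : Set (Fin (n+1))) := by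
  rintro p ⟨x, hx, hrel⟩
  obtain ⟨c, hc, hrep⟩ := phirel_rep L hrel
  constructor
  · intro f hf
    apply hf
    exact ⟨c, x, hx, funext fun i => by rw [hrep i, div_eq_mul_inv]⟩
  · intro i
    simp only [Set.mem_univ, iff_true]
    rw [hrep i]
    exact mul_ne_zero hc (inv_ne_zero (hx i))

/-- A solution of the scattering equations maps into `𝕃_u`. -/
lemma sol_in_Lu (L : Matrix (Fin (d+1)) (Fin (n+1)) ℂ) {u : Fin (n+1) → ℂ}
    {x : Fin d → ℂ} {p : Pn (Fin (n+1))} (hs : IsSol L u x) (hrel : PhiRel L x p) :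
    p ∈ LuSet L u := by
  obtain ⟨c, hc, hrep⟩ := phirel_rep L hrel
  intro k
  calc ∑ i, L k.succ i * u i * p.rep i
      = c * ∑ i, u i * L k.succ i / ell ℂ L x i := by
        rw [Finset.mul_sum]
        refine Finset.sum_congr rfl fun i _ => ?_
        rw [hrep i, div_eq_mul_inv]; ring
    _ = 0 := by rw [hs.2 k, mul_zero]

/-- `φ` is injective on the complement when `L` has full row rank. -/
lemma phi_injective (L : Matrix (Fin (d+1)) (Fin (n+1)) ℂ) (hrank : L.rank = d + 1)
    {x x' : Fin d → ℂ} (hx : x ∈ complementX L) (hx' : x' ∈ complementX L)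
    {p : Pn (Fin (n+1))} (h : PhiRel L x p) (h' : PhiRel L x' p) : x' = x := by
  obtain ⟨hv, rfl⟩ := h
  obtain ⟨hv', heq⟩ := h'
  rw [Projectivization.mk_eq_mk_iff'] at heq
  obtain ⟨a, ha⟩ := heq
  have ha' : ∀ i, (ell ℂ L x i)⁻¹ = a * (ell ℂ L x' i)⁻¹ := by
    intro i
    have := congrFun ha i
    simp only [Pi.smul_apply, smul_eq_mul] at this
    exact this.symm
  have hane : a ≠ 0 := by
    intro h0
    have := ha' 0
    rw [h0, zero_mul, inv_eq_zero] at this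
    exact hx 0 this
  have hell : ∀ i, ell ℂ L x' i = a * ell ℂ L x i := by
    intro i
    have h1 : ((ell ℂ L x i)⁻¹)⁻¹ = (a * (ell ℂ L x' i)⁻¹)⁻¹ := by rw [ha' i]
    rw [inv_inv, mul_inv, inv_inv] at h1
    rw [h1, ← mul_assoc, mul_inv_cancel₀ hane, one_mul]
  set v0 : Fin (d+1) → ℂ :=
    Fin.cons (a - 1) (fun k => a * x k - x' k) with hv0
  have hv0zero : v0 = 0 := by
    apply rows_indep L hrank
    intro i
    rw [Fin.sum_univ_succ]
    simp only [hv0, Fin.cons_zero, Fin.cons_succ]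
    have hX : ∑ k : Fin d, (a * x k - x' k) * L k.succ i
        = a * (∑ k : Fin d, x k * L k.succ i) - ∑ k : Fin d, x' k * L k.succ i := by
      rw [Finset.mul_sum, ← Finset.sum_sub_distrib]
      exact Finset.sum_congr rfl fun k _ => by ring
    rw [hX]
    have h2 := hell i
    simp only [ell] at h2
    linear_combination -h2
  have ha1 : a - 1 = 0 := by
    have := congrFun hv0zero 0
    simpa [hv0] using this
  have haone : a = 1 := sub_eq_zero.mp ha1
  funext k
  have hk := congrFun hv0zero k.succ
  simp only [hv0, Fin.cons_succ, Pi.zero_apply] at hk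
  rw [haone, one_mul] at hk
  linear_combination -hk

/-- Main existence lemma: for `∑ uᵢ ≠ 0`, every point of `𝕃_u ∩ ℛ_L ∩ U` comes from
a solution of the scattering equations. -/
lemma main_exists (L : Matrix (Fin (d+1)) (Fin (n+1)) ℂ) (u : Fin (n+1) → ℂ)
    (hu : ∑ i, u i ≠ 0) {p : Pn (Fin (n+1))}
    (hLu : p ∈ LuSet L u) (hRL : p ∈ RL L)
    (hU : p ∈ Ustratum (Set.univ : Set (Fin (n+1)))) :
    ∃ x : Fin d → ℂ, IsSol L u x ∧ PhiRel L x p := by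
  have hynz : ∀ i, p.rep i ≠ 0 := fun i => (hU i).mpr (Set.mem_univ i)
  set y := p.rep with hy
  have hdot : ∀ lam : Fin (n+1) → ℂ, L.mulVec lam = 0 → ∑ i, (y i)⁻¹ * lam i = 0 := by
    intro lam hlam
    have h0 : ∀ r, ∑ i, lam i * L r i = 0 := by
      intro r
      have := congrFun hlam r
      simp only [Matrix.mulVec, dotProduct, Pi.zero_apply] at this
      rw [← this]
      exact Finset.sum_congr rfl fun i _ => mul_comm _ _
    have := zar_inv_relation L y hRL hynz lam h0
    rw [← this]
    exact Finset.sum_congr rfl fun i _ => mul_comm _ _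
  obtain ⟨w, hw⟩ := dot_ker_imp_rowspace L (fun i => (y i)⁻¹) hdot
  have hz : ∀ i, (y i)⁻¹ = w 0 * L 0 i + ∑ k : Fin d, w k.succ * L k.succ i := by
    intro i; rw [hw i, Fin.sum_univ_succ]
  have hw0 : w 0 ≠ 0 := by
    intro h0
    apply hu
    have key : ∀ i, u i = ∑ k : Fin d, w k.succ * (L k.succ i * u i * y i) := by
      intro i
      have h1 : (y i)⁻¹ = ∑ k : Fin d, w k.succ * L k.succ i := by
        rw [hz i, h0, zero_mul, zero_add]
      have h3 : (∑ k : Fin d, w k.succ * L k.succ i) * (u i * y i)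
          = ∑ k : Fin d, w k.succ * (L k.succ i * u i * y i) := by
        rw [Finset.sum_mul]
        exact Finset.sum_congr rfl fun k _ => by ring
      rw [← h3, ← h1, mul_comm (u i) (y i), ← mul_assoc, inv_mul_cancel₀ (hynz i), one_mul]
    calc ∑ i, u i = ∑ i, ∑ k : Fin d, w k.succ * (L k.succ i * u i * y i) :=
          Finset.sum_congr rfl fun i _ => key i
      _ = ∑ k : Fin d, ∑ i, w k.succ * (L k.succ i * u i * y i) := Finset.sum_comm
      _ = ∑ k : Fin d, w k.succ * ∑ i, L k.succ i * u i * y i := by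
          refine Finset.sum_congr rfl fun k _ => ?_
          rw [Finset.mul_sum]
      _ = 0 := Finset.sum_eq_zero fun k _ => by rw [hLu k, mul_zero]
  set x : Fin d → ℂ := fun k => w k.succ / w 0 with hxdef
  have hell : ∀ i, w 0 * ell ℂ L x i = (y i)⁻¹ := by
    intro i
    rw [hz i]
    simp only [ell, mul_add, Finset.mul_sum]
    congr 1
    refine Finset.sum_congr rfl fun k _ => ?_
    simp only [hxdef]
    field_simp
  have hxcomp : x ∈ complementX L := by
    intro i hzero
    exact (inv_ne_zero (hynz i)) (by rw [← hell i, hzero, mul_zero])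
  have hinv : ∀ i, (ell ℂ L x i)⁻¹ = w 0 * y i := by
    intro i
    have h2 : ell ℂ L x i = (w 0 * y i)⁻¹ := by
      rw [mul_inv, ← hell i, ← mul_assoc, inv_mul_cancel₀ hw0, one_mul]
    rw [h2, inv_inv]
  have hvne : (fun i => (ell ℂ L x i)⁻¹) ≠ 0 := by
    intro hzero
    have := congrFun hzero 0
    simp only [Pi.zero_apply, inv_eq_zero] at this
    exact hxcomp 0 this
  refine ⟨x, ⟨hxcomp, ?_⟩, ⟨hvne, ?_⟩⟩
  · intro k
    calc ∑ i, u i * L k.succ i / ell ℂ L x i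
        = ∑ i, w 0 * (L k.succ i * u i * y i) := by
          refine Finset.sum_congr rfl fun i _ => ?_
          rw [div_eq_mul_inv, hinv i]; ring
      _ = w 0 * ∑ i, L k.succ i * u i * y i := (Finset.mul_sum _ _ _).symm
      _ = 0 := by rw [hLu k, mul_zero]
  · have : Projectivization.mk ℂ (fun i => (ell ℂ L x i)⁻¹) hvne
        = Projectivization.mk ℂ p.rep p.rep_nonzero := by
      rw [Projectivization.mk_eq_mk_iff']
      exact ⟨w 0, funext fun i => by
        simp only [Pi.smul_apply, smul_eq_mul]
        exact (hinv i).symm⟩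
    rw [Projectivization.mk_rep] at this
    exact this.symm

end Aux

/-- Lemma 3.2.  If `rank L = d+1` and `u` is generic, then
`𝕃_u ∩ im φ = 𝕃_u ∩ ℛ_L^∘`, and `φ` gives a one-to-one correspondence between the
solutions of the scattering equations and the points of `𝕃_u ∩ ℛ_L^∘`. -/
theorem solutions_biject_with_dense_stratum
    {d n : ℕ} (L : Matrix (Fin (d+1)) (Fin (n+1)) ℂ) (hrank : L.rank = d + 1) :
    Generically (fun u : Fin (n+1) → ℂ =>
      LuSet L u ∩ imPhi L = LuSet L u ∩ (RL L ∩ Ustratum (Set.univ : Set (Fin (n+1)))) ∧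
      (∀ x : Fin d → ℂ, IsSol L u x → ∀ p : Pn (Fin (n+1)), PhiRel L x p →
        p ∈ LuSet L u ∩ (RL L ∩ Ustratum (Set.univ : Set (Fin (n+1))))) ∧
      (∀ p ∈ LuSet L u ∩ (RL L ∩ Ustratum (Set.univ : Set (Fin (n+1)))),
        ∃! x : Fin d → ℂ, IsSol L u x ∧ PhiRel L x p)) := by
  refine ⟨∑ i : Fin (n+1), MvPolynomial.X i, ?_, ?_⟩
  · intro hzero
    have h1 := congrArg (MvPolynomial.eval fun _ : Fin (n+1) => (1:ℂ)) hzero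
    simp only [map_sum, MvPolynomial.eval_X, Finset.sum_const, Finset.card_univ,
      Fintype.card_fin, nsmul_eq_mul, mul_one, map_zero] at h1
    exact Nat.cast_ne_zero.mpr (Nat.succ_ne_zero n) h1
  · intro u hu
    have hu' : ∑ i, u i ≠ 0 := by
      intro h0
      apply hu
      simp [h0]
    refine ⟨?_, ?_, ?_⟩
    · apply Set.eq_of_subset_of_subset
      · rintro p ⟨h1, h2⟩
        exact ⟨h1, imPhi_subset L h2⟩
      · rintro p ⟨h1, h2⟩
        obtain ⟨x, hs, hrel⟩ := main_exists L u hu' h1 h2.1 h2.2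
        exact ⟨h1, ⟨x, hs.1, hrel⟩⟩
    · intro x hs p hrel
      exact ⟨sol_in_Lu L hs hrel, imPhi_subset L ⟨x, hs.1, hrel⟩⟩
    · rintro p ⟨h1, h2⟩
      obtain ⟨x, hs, hrel⟩ := main_exists L u hu' h1 h2.1 h2.2
      refine ⟨x, ⟨hs, hrel⟩, ?_⟩
      rintro x' ⟨hs', hrel'⟩
      exact phi_injective L hrank hs.1 hs'.1 hrel hrel'

end ScatteringPaper
end
end

section
/- If L ∈ ℂ^{(d+1)×(n+1)} has rank d+1 and the matroid M(A^⊤) represented by the columns of A^⊤ (the last d rows of L) is uniform, then every flat I of M(L) other than the ground set {0,…,n} satisfies rank(A_I^⊤) = rank(L_I); equivalently, M(L) has no nonempty flats contained in the hyperplane at infinity. -/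
open scoped BigOperators
noncomputable section

namespace ScatteringPaper

open CategoryTheory AlgebraicTopology

variable {d : ℕ} {ι : Type} [Fintype ι] [DecidableEq ι]

/-- Example 3.6.  If `rank L = d+1` and the matroid `M(A^⊤)` of the columns
of `A^⊤` (the last `d` rows of `L`) is uniform, then every flat `I ≠ {0,…,n}` of `M(L)`
satisfies `rank A_I^⊤ = rank L_I` (no nonempty flats at infinity). -/
theorem uniform_bottom_matroid_no_flats_at_infinity
    {d n : ℕ} (L : Matrix (Fin (d+1)) (Fin (n+1)) ℂ) (hrank : L.rank = d + 1)
    (huniform : ∀ S : Finset (Fin (n+1)), S.card ≤ rkA ℂ L Set.univ →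
      LinearIndependent ℂ (fun i : {a // a ∈ S} => fun k : Fin d => L k.succ i.1)) :
    ∀ I : Set (Fin (n+1)), IsFlat ℂ L I → I ≠ Set.univ → rkA ℂ L I = rkL ℂ L I := by
  classical
  intro I hflat hne
  have colsL : Fin (n+1) → (Fin (d+1) → ℂ) := fun i r => L r i
  set π : (Fin (d+1) → ℂ) →ₗ[ℂ] (Fin d → ℂ) := LinearMap.funLeft ℂ ℂ Fin.succ with hπ
  have hmap : ∀ J : Set (Fin (n+1)),
      Submodule.map π (Submodule.span ℂ ((fun i => fun r => L r i) '' J))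
        = Submodule.span ℂ ((fun i => fun k : Fin d => L k.succ i) '' J) := by
    intro J
    rw [Submodule.map_span, Set.image_image]
    rfl
  -- rkL of any set is ≤ d+1
  have hdim : Module.finrank ℂ (Fin (d+1) → ℂ) = d + 1 := by simp [Module.finrank_pi]
  have hrkL_le : ∀ J : Set (Fin (n+1)), rkL ℂ L J ≤ d + 1 := by
    intro J
    have := Submodule.finrank_le (Submodule.span ℂ ((fun i => fun r => L r i) '' J))
    rwa [hdim] at this
  -- rkA I ≤ rkL I always
  have hAleL : ∀ J : Set (Fin (n+1)), rkA ℂ L J ≤ rkL ℂ L J := by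
    intro J
    have := Submodule.finrank_map_le π (Submodule.span ℂ ((fun i => fun r => L r i) '' J))
    rwa [hmap J] at this
  -- rkA univ = d
  have hLuniv : rkL ℂ L Set.univ = d + 1 := by
    have h := L.rank_eq_finrank_span_cols
    rw [hrank] at h
    have : rkL ℂ L Set.univ
        = Module.finrank ℂ (Submodule.span ℂ (Set.range L.transpose)) := by
      rw [rkL, Set.image_univ]; rfl
    exact this.trans h.symm
  have hAuniv : rkA ℂ L Set.univ = d := by
    have hLtop : Submodule.span ℂ ((fun i => fun r => L r i) '' (Set.univ : Set (Fin (n+1)))) = ⊤ := by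
      apply Submodule.eq_top_of_finrank_eq
      rw [hdim]; exact hLuniv
    have hsurj : Function.Surjective π :=
      LinearMap.funLeft_surjective_of_injective ℂ ℂ Fin.succ (Fin.succ_injective d)
    have : Submodule.span ℂ ((fun i => fun k : Fin d => L k.succ i) '' (Set.univ : Set (Fin (n+1)))) = ⊤ := by
      rw [← hmap, hLtop, Submodule.map_top, LinearMap.range_eq_top.mpr hsurj]
    rw [rkA, this, finrank_top, Module.finrank_fin_fun]
  -- ranges of subtype families
  have hrangeA : ∀ S : Finset (Fin (n+1)),
      Set.range (fun i : {a // a ∈ S} => fun k : Fin d => L k.succ i.1)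
        = (fun i => fun k : Fin d => L k.succ i) '' (S : Set (Fin (n+1))) := by
    intro S
    rw [show (fun i : {a // a ∈ S} => fun k : Fin d => L k.succ i.1)
        = (fun i => fun k : Fin d => L k.succ i) ∘ (Subtype.val) from rfl,
      Set.range_comp, Subtype.range_coe]
  rcases le_or_gt I.toFinset.card d with hcard | hcard
  · -- small flat: rkA I = |I| ≥ rkL I
    have hind := huniform I.toFinset (by rw [hAuniv]; exact hcard)
    have hA : rkA ℂ L I = I.toFinset.card := by
      have h := finrank_span_eq_card hind
      rw [hrangeA, Set.coe_toFinset] at h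
      rw [rkA, h, Fintype.card_coe]
    have hLle : rkL ℂ L I ≤ I.toFinset.card := by
      have h := finrank_range_le_card (R := ℂ) (fun i : {a // a ∈ I.toFinset} => fun r => L r i.1)
      rw [show Set.range (fun i : {a // a ∈ I.toFinset} => fun r => L r i.1)
          = (fun i => fun r => L r i) '' (I.toFinset : Set (Fin (n+1))) by
        rw [show (fun i : {a // a ∈ I.toFinset} => fun r => L r i.1)
            = (fun i => fun r => L r i) ∘ (Subtype.val) from rfl,
          Set.range_comp, Subtype.range_coe],
        Set.coe_toFinset, Fintype.card_coe] at h
      exact h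
    exact le_antisymm (hAleL I) (by rw [hA]; exact hLle)
  · -- big flat: rkA I ≥ d and rkL I ≤ d
    obtain ⟨S, hSsub, hScard⟩ := Finset.exists_subset_card_eq (le_of_lt hcard)
    have hind := huniform S (by rw [hAuniv, hScard])
    have hdle : d ≤ rkA ℂ L I := by
      have h := finrank_span_eq_card hind
      rw [hrangeA, Fintype.card_coe, hScard] at h
      have mono : Module.finrank ℂ (Submodule.span ℂ ((fun i => fun k : Fin d => L k.succ i) '' (S : Set (Fin (n+1)))))
          ≤ Module.finrank ℂ (Submodule.span ℂ ((fun i => fun k : Fin d => L k.succ i) '' I)) := by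
        apply Submodule.finrank_mono
        apply Submodule.span_mono
        apply Set.image_mono
        intro x hx
        rw [← Set.mem_toFinset]
        exact hSsub hx
      exact h.symm.trans_le mono
    have hLled : rkL ℂ L I ≤ d := by
      by_contra h
      push_neg at h
      have hLeq : rkL ℂ L I = d + 1 := le_antisymm (hrkL_le I) h
      obtain ⟨i, hi⟩ : ∃ i, i ∉ I := by
        by_contra hc
        push_neg at hc
        exact hne (Set.eq_univ_of_forall hc)
      have := hflat i hi
      rw [hLeq] at this
      exact absurd (hrkL_le (insert i I)) (not_le_of_gt this)
    exact le_antisymm (hAleL I) (le_trans hLled hdle)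

end ScatteringPaper
end
end
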